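/- arXiv:1611.03090 — 5 statements merged into one kernel-verified Lean document; each statement's English description precedes it below -/
import Mathlib

section
/- Let four circles in the plane be pairwise distinct and not all tangent at one point. Then the set of circles that are tangent to each of the four given circles has at most 6 elements. -/
noncomputable section

/-- The Euclidean plane. -/
abbrev Plane := EuclideanSpace ℝ (Fin 2)

/-- Two circles (center, radius) are tangent: they are distinct and the distance between
centers equals the sum (external) or the absolute difference (internal) of the radii. -/
def Tangent (A B : Plane × ℝ) : Prop :=
  A ≠ B ∧ (dist A.1 B.1 = A.2 + B.2 ∨ dist A.1 B.1 = |A.2 - B.2|)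

namespace ApollAux

abbrev V4 := Fin 4 → ℝ

/-- The Lorentz bilinear form of signature (3,1) on ℝ⁴. -/
def Bf (x y : V4) : ℝ := x 0 * y 0 + x 1 * y 1 + x 2 * y 2 - x 3 * y 3

lemma Bf_symm (x y : V4) : Bf x y = Bf y x := by unfold Bf; ring

def Bl : V4 →ₗ[ℝ] V4 →ₗ[ℝ] ℝ :=
  LinearMap.mk₂ ℝ Bf
    (by intro a b c; simp [Bf, Pi.add_apply]; ring)
    (by intro t a c; simp [Bf, Pi.smul_apply, smul_eq_mul]; ring)
    (by intro a b c; simp [Bf, Pi.add_apply]; ring)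
    (by intro t a c; simp [Bf, Pi.smul_apply, smul_eq_mul]; ring)

lemma Bl_apply (x y : V4) : Bl x y = Bf x y := rfl

lemma Bf_add_left (x y z : V4) : Bf (x + y) z = Bf x z + Bf y z := by
  simp [Bf, Pi.add_apply]; ring
lemma Bf_sub_left (x y z : V4) : Bf (x - y) z = Bf x z - Bf y z := by
  simp [Bf, Pi.sub_apply]; ring
lemma Bf_smul_left (t : ℝ) (x z : V4) : Bf (t • x) z = t * Bf x z := by
  simp [Bf, Pi.smul_apply, smul_eq_mul]; ring
lemma Bf_add_right (x y z : V4) : Bf x (y + z) = Bf x y + Bf x z := by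
  simp [Bf, Pi.add_apply]; ring
lemma Bf_sub_right (x y z : V4) : Bf x (y - z) = Bf x y - Bf x z := by
  simp [Bf, Pi.sub_apply]; ring
lemma Bf_smul_right (t : ℝ) (x z : V4) : Bf x (t • z) = t * Bf x z := by
  simp [Bf, Pi.smul_apply, smul_eq_mul]; ring

lemma Bf_nondeg (x : V4) (h : ∀ y, Bf x y = 0) : x = 0 := by
  funext i
  fin_cases i
  · simpa [Bf] using h ![1,0,0,0]
  · simpa [Bf] using h ![0,1,0,0]
  · simpa [Bf] using h ![0,0,1,0]
  · have := h ![0,0,0,1]; simp [Bf] at this; simpa using this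

/-- x = ±1 -/
def IsPM (x : ℝ) : Prop := x = 1 ∨ x = -1

lemma IsPM.sq {x : ℝ} (h : IsPM x) : x * x = 1 := by rcases h with h|h <;> rw [h] <;> norm_num
lemma IsPM.ne_zero {x : ℝ} (h : IsPM x) : x ≠ 0 := by rcases h with h|h <;> rw [h] <;> norm_num
lemma IsPM.mul {x y : ℝ} (hx : IsPM x) (hy : IsPM y) : IsPM (x * y) := by
  rcases hx with h|h <;> rcases hy with h'|h' <;> rw [h, h'] <;> [left; right; right; left] <;> norm_num
lemma IsPM.neg {x : ℝ} (h : IsPM x) : IsPM (-x) := by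
  rcases h with h|h <;> rw [h] <;> [right; left] <;> norm_num

/-- Two orthogonal null vectors in Lorentz space ℝ^{3,1} are proportional. -/
lemma null_orth_null {z n : V4} (hn : n ≠ 0) (hqn : Bf n n = 0) (hqz : Bf z z = 0)
    (ho : Bf z n = 0) : ∃ t : ℝ, z = t • n := by
  have h3 : n 0 ^ 2 + n 1 ^ 2 + n 2 ^ 2 = n 3 ^ 2 := by unfold Bf at hqn; linear_combination hqn
  have hz3 : z 0 ^ 2 + z 1 ^ 2 + z 2 ^ 2 = z 3 ^ 2 := by unfold Bf at hqz; linear_combination hqz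
  have hzn : z 0 * n 0 + z 1 * n 1 + z 2 * n 2 = z 3 * n 3 := by unfold Bf at ho; linear_combination ho
  have hn3 : n 3 ≠ 0 := by
    intro h
    apply hn
    have h0 : n 0 ^ 2 + n 1 ^ 2 + n 2 ^ 2 = 0 := by rw [h] at h3; simpa using h3
    have e0 : n 0 = 0 := by
      have hle : n 0 ^ 2 ≤ 0 := by nlinarith [sq_nonneg (n 1), sq_nonneg (n 2)]
      exact pow_eq_zero_iff (two_ne_zero) |>.1 (le_antisymm hle (sq_nonneg _))
    have e1 : n 1 = 0 := by
      have hle : n 1 ^ 2 ≤ 0 := by nlinarith [sq_nonneg (n 0), sq_nonneg (n 2)]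
      exact pow_eq_zero_iff (two_ne_zero) |>.1 (le_antisymm hle (sq_nonneg _))
    have e2 : n 2 = 0 := by
      have hle : n 2 ^ 2 ≤ 0 := by nlinarith [sq_nonneg (n 0), sq_nonneg (n 1)]
      exact pow_eq_zero_iff (two_ne_zero) |>.1 (le_antisymm hle (sq_nonneg _))
    funext i; fin_cases i <;> simp [e0, e1, e2, h]
  have hpos : 0 < n 0 ^ 2 + n 1 ^ 2 + n 2 ^ 2 := by
    rw [h3]; positivity
  have hS : n 0 ^ 2 + n 1 ^ 2 + n 2 ^ 2 ≠ 0 := ne_of_gt hpos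
  have hlag : (z 0 * n 1 - z 1 * n 0)^2 + (z 0 * n 2 - z 2 * n 0)^2 + (z 1 * n 2 - z 2 * n 1)^2 = 0 := by
    linear_combination (n 0^2 + n 1^2 + n 2^2) * hz3 + z 3^2 * h3
      - (z 0*n 0 + z 1*n 1 + z 2*n 2 + z 3*n 3) * hzn
  have c01 : z 0 * n 1 - z 1 * n 0 = 0 := by
    have hle : (z 0 * n 1 - z 1 * n 0)^2 ≤ 0 := by
      nlinarith [sq_nonneg (z 0 * n 2 - z 2 * n 0), sq_nonneg (z 1 * n 2 - z 2 * n 1)]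
    exact pow_eq_zero_iff (two_ne_zero) |>.1 (le_antisymm hle (sq_nonneg _))
  have c02 : z 0 * n 2 - z 2 * n 0 = 0 := by
    have hle : (z 0 * n 2 - z 2 * n 0)^2 ≤ 0 := by
      nlinarith [sq_nonneg (z 0 * n 1 - z 1 * n 0), sq_nonneg (z 1 * n 2 - z 2 * n 1)]
    exact pow_eq_zero_iff (two_ne_zero) |>.1 (le_antisymm hle (sq_nonneg _))
  have c12 : z 1 * n 2 - z 2 * n 1 = 0 := by
    have hle : (z 1 * n 2 - z 2 * n 1)^2 ≤ 0 := by
      nlinarith [sq_nonneg (z 0 * n 1 - z 1 * n 0), sq_nonneg (z 0 * n 2 - z 2 * n 0)]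
    exact pow_eq_zero_iff (two_ne_zero) |>.1 (le_antisymm hle (sq_nonneg _))
  set t : ℝ := (z 0 * n 0 + z 1 * n 1 + z 2 * n 2) / (n 0 ^ 2 + n 1 ^ 2 + n 2 ^ 2) with ht
  refine ⟨t, ?_⟩
  have e0 : z 0 = t * n 0 := by
    rw [ht, div_mul_eq_mul_div, eq_div_iff hS]
    linear_combination (n 1) * c01 + (n 2) * c02
  have e1 : z 1 = t * n 1 := by
    rw [ht, div_mul_eq_mul_div, eq_div_iff hS]
    linear_combination (-(n 0)) * c01 + (n 2) * c12
  have e2 : z 2 = t * n 2 := by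
    rw [ht, div_mul_eq_mul_div, eq_div_iff hS]
    linear_combination (-(n 0)) * c02 + (-(n 1)) * c12
  have key3 : t * n 3 * n 3 = z 3 * n 3 := by
    rw [ht, div_mul_eq_mul_div, div_mul_eq_mul_div, div_eq_iff hS]
    linear_combination (n 3^2) * hzn - (z 3 * n 3) * h3
  have e3 : z 3 = t * n 3 := (mul_right_cancel₀ hn3 key3).symm
  funext i; fin_cases i <;> simp [e0, e1, e2, e3, Pi.smul_apply, smul_eq_mul]


/-! ### The lift of circles to the Lorentz quadric -/

lemma dist_sq (p q : Plane) : dist p q ^ 2 = (p 0 - q 0)^2 + (p 1 - q 1)^2 := by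
  rw [EuclideanSpace.dist_eq, Real.sq_sqrt (by positivity)]
  simp [Fin.sum_univ_two, Real.dist_eq, sq_abs]

lemma eq_of_sq_eq {a b : ℝ} (ha : 0 ≤ a) (hb : 0 ≤ b) (h : a ^ 2 = b ^ 2) : a = b := by
  have := congrArg Real.sqrt h
  rwa [Real.sqrt_sq ha, Real.sqrt_sq hb] at this

/-- The lift of a circle (center, radius) to the Lorentz space. -/
def lift (d : Plane × ℝ) : V4 :=
  ![d.1 0 / d.2, d.1 1 / d.2,
    ((d.1 0)^2 + (d.1 1)^2 - d.2^2 - 1) / (2*d.2),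
    ((d.1 0)^2 + (d.1 1)^2 - d.2^2 + 1) / (2*d.2)]

lemma lift0 (d : Plane × ℝ) : lift d 0 = d.1 0 / d.2 := rfl
lemma lift1 (d : Plane × ℝ) : lift d 1 = d.1 1 / d.2 := rfl
lemma lift2 (d : Plane × ℝ) :
    lift d 2 = ((d.1 0)^2 + (d.1 1)^2 - d.2^2 - 1) / (2*d.2) := rfl
lemma lift3 (d : Plane × ℝ) :
    lift d 3 = ((d.1 0)^2 + (d.1 1)^2 - d.2^2 + 1) / (2*d.2) := rfl

lemma Bf_lift (d e : Plane × ℝ) (hd : d.2 ≠ 0) (he : e.2 ≠ 0) :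
    Bf (lift d) (lift e) = (d.2^2 + e.2^2 - dist d.1 e.1 ^ 2) / (2 * d.2 * e.2) := by
  unfold Bf
  rw [dist_sq, lift0, lift1, lift2, lift3, lift0, lift1, lift2, lift3]
  field_simp
  ring

lemma q_lift (d : Plane × ℝ) (hd : d.2 ≠ 0) : Bf (lift d) (lift d) = 1 := by
  rw [Bf_lift d d hd hd, dist_self]
  field_simp
  ring

lemma lift_sub32 (d : Plane × ℝ) (hd : d.2 ≠ 0) : lift d 3 - lift d 2 = 1 / d.2 := by
  rw [lift2, lift3, div_sub_div_same]
  have h : (d.1 0^2 + d.1 1^2 - d.2^2 + 1) - (d.1 0^2 + d.1 1^2 - d.2^2 - 1) = 2 := by ring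
  rw [h]
  field_simp

lemma lift_inj {d e : Plane × ℝ} (hd : 0 < d.2) (he : 0 < e.2) (h : lift d = lift e) :
    d = e := by
  have h32d := lift_sub32 d (ne_of_gt hd)
  have h32e := lift_sub32 e (ne_of_gt he)
  have hr : d.2 = e.2 := by
    have : 1 / d.2 = 1 / e.2 := by rw [← h32d, ← h32e, h]
    field_simp at this
    linarith
  have he2 : e.2 ≠ 0 := ne_of_gt he
  have h0 : d.1 0 = e.1 0 := by
    have := congrFun h 0
    rw [lift0, lift0, hr] at this
    field_simp at this
    exact this
  have h1 : d.1 1 = e.1 1 := by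
    have := congrFun h 1
    rw [lift1, lift1, hr] at this
    field_simp at this
    exact this
  have hc : d.1 = e.1 := by
    ext i; fin_cases i
    · exact h0
    · exact h1
  exact Prod.ext hc hr

lemma lift_ne_neg {d e : Plane × ℝ} (hd : 0 < d.2) (he : 0 < e.2) :
    lift d ≠ -lift e := by
  intro h
  have h32d := lift_sub32 d (ne_of_gt hd)
  have h32e := lift_sub32 e (ne_of_gt he)
  have h3 := congrFun h 3
  have h2 := congrFun h 2
  simp only [Pi.neg_apply] at h3 h2
  have hd' : 0 < 1 / d.2 := by positivity
  have he' : 0 < 1 / e.2 := by positivity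
  have : 1 / d.2 = -(1 / e.2) := by
    rw [← h32d, ← h32e]
    rw [h3, h2]; ring
  linarith

/-- Tangency in terms of the Lorentz form. -/
lemma tangent_isPM {d e : Plane × ℝ} (hd : 0 < d.2) (he : 0 < e.2)
    (h : Tangent d e) : IsPM (Bf (lift d) (lift e)) := by
  rw [Bf_lift d e (ne_of_gt hd) (ne_of_gt he)]
  rcases h.2 with h'|h'
  · right
    rw [h']
    field_simp
    ring
  · left
    rw [h']
    rw [sq_abs]
    field_simp
    ring

lemma isPM_tangent {d e : Plane × ℝ} (hd : 0 < d.2) (he : 0 < e.2)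
    (hne : d ≠ e) (h : IsPM (Bf (lift d) (lift e))) : Tangent d e := by
  rw [Bf_lift d e (ne_of_gt hd) (ne_of_gt he)] at h
  refine ⟨hne, ?_⟩
  have h2 : (2 : ℝ) * d.2 * e.2 ≠ 0 := by positivity
  rcases h with h|h
  · right
    rw [div_eq_iff h2] at h
    have hsq : dist d.1 e.1 ^ 2 = |d.2 - e.2| ^ 2 := by
      rw [sq_abs]; linarith
    exact eq_of_sq_eq dist_nonneg (abs_nonneg _) hsq
  · left
    rw [div_eq_iff h2] at h
    have hsq : dist d.1 e.1 ^ 2 = (d.2 + e.2) ^ 2 := by linarith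
    exact eq_of_sq_eq dist_nonneg (by linarith) hsq

/-- From a common orthogonal null vector, produce a common point of the circles. -/
lemma common_point {n : V4} (hn : n ≠ 0) (hq : Bf n n = 0)
    (c : Fin 4 → Plane) (r : Fin 4 → ℝ) (hr : ∀ i, 0 < r i)
    (horth : ∀ i, Bf (lift (c i, r i)) n = 0) :
    ∃ p : Plane, ∀ i, dist p (c i) = r i := by
  have hq' : n 0 ^ 2 + n 1 ^ 2 + n 2 ^ 2 = n 3 ^ 2 := by unfold Bf at hq; linear_combination hq
  -- the linear relation satisfied by each circle
  have heq : ∀ i, 2 * (c i 0 * n 0 + c i 1 * n 1)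
      + ((c i 0)^2 + (c i 1)^2 - (r i)^2) * (n 2 - n 3) - (n 2 + n 3) = 0 := by
    intro i
    have h := horth i
    unfold Bf at h
    rw [lift0, lift1, lift2, lift3] at h
    have hri : r i ≠ 0 := ne_of_gt (hr i)
    field_simp at h
    have h' : (2 * (r i)^2) * (2 * (c i 0 * n 0 + c i 1 * n 1)
        + ((c i 0)^2 + (c i 1)^2 - (r i)^2) * (n 2 - n 3) - (n 2 + n 3)) = 0 := by
      linear_combination (2 * (r i)^2) * h
    rcases mul_eq_zero.1 h' with h''|h''
    · exact absurd h'' (by positivity)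
    · exact h''
  have hAB : n 2 ≠ n 3 := by
    intro h23
    have h0 : n 0 ^ 2 + n 1 ^ 2 = 0 := by rw [h23] at hq'; linarith
    have e0 : n 0 = 0 := by
      have hle : n 0 ^ 2 ≤ 0 := by nlinarith [sq_nonneg (n 1)]
      exact pow_eq_zero_iff (two_ne_zero) |>.1 (le_antisymm hle (sq_nonneg _))
    have e1 : n 1 = 0 := by
      have hle : n 1 ^ 2 ≤ 0 := by nlinarith [sq_nonneg (n 0)]
      exact pow_eq_zero_iff (two_ne_zero) |>.1 (le_antisymm hle (sq_nonneg _))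
    have h3 : n 3 = 0 := by
      have := heq 0
      rw [e0, e1, h23] at this
      simp at this
      linarith
    apply hn
    funext i; fin_cases i <;> simp [e0, e1, h23, h3]
  have hD : n 3 - n 2 ≠ 0 := fun h => hAB (by linarith)
  set p : Plane := (EuclideanSpace.equiv (Fin 2) ℝ).symm ![n 0 / (n 3 - n 2), n 1 / (n 3 - n 2)] with hp
  have hp0 : p 0 = n 0 / (n 3 - n 2) := rfl
  have hp1 : p 1 = n 1 / (n 3 - n 2) := rfl
  refine ⟨p, fun i => ?_⟩
  apply eq_of_sq_eq dist_nonneg (le_of_lt (hr i))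
  rw [dist_sq, hp0, hp1]
  field_simp
  linear_combination hq' - (n 3 - n 2) * heq i


/-! ### Sign class combinatorics -/

/-- Classification of sign classes orthogonal to a full-support vector. -/
lemma classify_class (ν : Fin 4 → ℝ) (hν : ∀ i, ν i ≠ 0)
    (hsum : ν 0 + ν 1 + ν 2 + ν 3 = 0) (x y z : ℝ)
    (hx : IsPM x) (hy : IsPM y) (hz : IsPM z)
    (hne : ¬(x = 1 ∧ y = 1 ∧ z = 1))
    (ho : ν 0 + ν 1 * x + ν 2 * y + ν 3 * z = 0) :
    (x = -1 ∧ y = -1 ∧ z = 1 ∧ ν 1 + ν 2 = 0) ∨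
    (x = -1 ∧ y = 1 ∧ z = -1 ∧ ν 1 + ν 3 = 0) ∨
    (x = 1 ∧ y = -1 ∧ z = -1 ∧ ν 2 + ν 3 = 0) := by
  rcases hx with hx|hx <;> rcases hy with hy|hy <;> rcases hz with hz|hz <;>
    subst hx <;> subst hy <;> subst hz
  · exact absurd ⟨rfl, rfl, rfl⟩ hne
  · exact absurd (by linarith) (hν 3)
  · exact absurd (by linarith) (hν 2)
  · exact Or.inr (Or.inr ⟨rfl, rfl, rfl, by linarith⟩)
  · exact absurd (by linarith) (hν 1)
  · exact Or.inr (Or.inl ⟨rfl, rfl, rfl, by linarith⟩)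
  · exact Or.inl ⟨rfl, rfl, rfl, by linarith⟩
  · exact absurd (by linarith) (hν 0)

/-- No four pairwise-distinct sign classes are orthogonal to a full-support vector. -/
lemma four_classes (ν : Fin 4 → ℝ) (hν : ∀ i, ν i ≠ 0)
    (hsum : ν 0 + ν 1 + ν 2 + ν 3 = 0)
    (x1 y1 z1 x2 y2 z2 x3 y3 z3 : ℝ)
    (hx1 : IsPM x1) (hy1 : IsPM y1) (hz1 : IsPM z1)
    (hx2 : IsPM x2) (hy2 : IsPM y2) (hz2 : IsPM z2)
    (hx3 : IsPM x3) (hy3 : IsPM y3) (hz3 : IsPM z3)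
    (hne1 : ¬(x1 = 1 ∧ y1 = 1 ∧ z1 = 1))
    (hne2 : ¬(x2 = 1 ∧ y2 = 1 ∧ z2 = 1))
    (hne3 : ¬(x3 = 1 ∧ y3 = 1 ∧ z3 = 1))
    (hd12 : ¬(x1 = x2 ∧ y1 = y2 ∧ z1 = z2))
    (hd13 : ¬(x1 = x3 ∧ y1 = y3 ∧ z1 = z3))
    (hd23 : ¬(x2 = x3 ∧ y2 = y3 ∧ z2 = z3))
    (ho1 : ν 0 + ν 1 * x1 + ν 2 * y1 + ν 3 * z1 = 0)
    (ho2 : ν 0 + ν 1 * x2 + ν 2 * y2 + ν 3 * z2 = 0)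
    (ho3 : ν 0 + ν 1 * x3 + ν 2 * y3 + ν 3 * z3 = 0) : False := by
  have D1 := classify_class ν hν hsum x1 y1 z1 hx1 hy1 hz1 hne1 ho1
  have D2 := classify_class ν hν hsum x2 y2 z2 hx2 hy2 hz2 hne2 ho2
  have D3 := classify_class ν hν hsum x3 y3 z3 hx3 hy3 hz3 hne3 ho3
  rcases D1 with ⟨e1,f1,g1,s1⟩|⟨e1,f1,g1,s1⟩|⟨e1,f1,g1,s1⟩ <;>
    rcases D2 with ⟨e2,f2,g2,s2⟩|⟨e2,f2,g2,s2⟩|⟨e2,f2,g2,s2⟩ <;>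
      rcases D3 with ⟨e3,f3,g3,s3⟩|⟨e3,f3,g3,s3⟩|⟨e3,f3,g3,s3⟩ <;>
    first
      | (refine hd12 ⟨?_, ?_, ?_⟩ <;> linarith)
      | (refine hd13 ⟨?_, ?_, ?_⟩ <;> linarith)
      | (refine hd23 ⟨?_, ?_, ?_⟩ <;> linarith)
      | (refine absurd ?_ (hν 1) ; linarith)

/-! ### The quadratic value on the 8 sign classes -/

def Fq (t : Fin 4 → Fin 4 → ℝ) (x y z : ℝ) : ℝ :=
  ∑ i, ∑ j, (![1, x, y, z] i) * (![1, x, y, z] j) * t i j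

lemma Fq_def (t : Fin 4 → Fin 4 → ℝ) (x y z : ℝ) :
    Fq t x y z = ∑ i, ∑ j, (![1, x, y, z] i) * (![1, x, y, z] j) * t i j := rfl

lemma Fq_expand (t : Fin 4 → Fin 4 → ℝ) (x y z : ℝ) :
    Fq t x y z = t 0 0 + x * t 0 1 + y * t 0 2 + z * t 0 3
      + x * t 1 0 + x * x * t 1 1 + x * y * t 1 2 + x * z * t 1 3
      + y * t 2 0 + y * x * t 2 1 + y * y * t 2 2 + y * z * t 2 3
      + z * t 3 0 + z * x * t 3 1 + z * y * t 3 2 + z * z * t 3 3 := by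
  simp [Fq, Fin.sum_univ_four]
  ring

lemma extract_offdiag (t : Fin 4 → Fin 4 → ℝ)
    (h1 : Fq t 1 1 1 = 1) (h2 : Fq t 1 1 (-1) = 1) (h3 : Fq t 1 (-1) 1 = 1)
    (h4 : Fq t 1 (-1) (-1) = 1) (h5 : Fq t (-1) 1 1 = 1) (h6 : Fq t (-1) 1 (-1) = 1)
    (h7 : Fq t (-1) (-1) 1 = 1) (h8 : Fq t (-1) (-1) (-1) = 1) :
    t 0 1 + t 1 0 = 0 ∧ t 0 2 + t 2 0 = 0 ∧ t 0 3 + t 3 0 = 0 ∧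
    t 1 2 + t 2 1 = 0 ∧ t 1 3 + t 3 1 = 0 ∧ t 2 3 + t 3 2 = 0 := by
  rw [Fq_expand] at h1 h2 h3 h4 h5 h6 h7 h8
  refine ⟨by linarith, by linarith, by linarith, by linarith, by linarith, by linarith⟩

abbrev T2 := Fin 2 × Fin 2 × Fin 2

def dec : Fin 2 → ℝ := fun a => if a = 0 then 1 else -1

lemma dec0 : dec 0 = 1 := rfl

lemma dec1 : dec 1 = -1 := rfl

lemma dec_isPM (a : Fin 2) : IsPM (dec a) := by
  fin_cases a
  · left; rfl
  · right; rfl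

lemma dec_inj {a b : Fin 2} (h : dec a = dec b) : a = b := by
  fin_cases a <;> fin_cases b <;> simp_all [dec] <;> norm_num at h

lemma dec_eq_of_isPM {x : ℝ} (h : IsPM x) : ∃ a : Fin 2, dec a = x := by
  rcases h with h|h
  · exact ⟨0, by rw [dec0, h]⟩
  · exact ⟨1, by rw [dec1, h]⟩

/-- If `Fq t = 1` holds on 7 of the 8 sign classes, it holds on all of them. -/
lemma seven_of_eight (t : Fin 4 → Fin 4 → ℝ) (m : T2)
    (h : ∀ s : T2, s ≠ m → Fq t (dec s.1) (dec s.2.1) (dec s.2.2) = 1) :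
    t 0 1 + t 1 0 = 0 ∧ t 0 2 + t 2 0 = 0 ∧ t 0 3 + t 3 0 = 0 ∧
    t 1 2 + t 2 1 = 0 ∧ t 1 3 + t 3 1 = 0 ∧ t 2 3 + t 3 2 = 0 := by
  rcases m with ⟨a, b, c⟩
  fin_cases a <;> fin_cases b <;> fin_cases c
  · -- missing (1, 1, 1)
    have k1 : Fq t 1 1 (-1) = 1 := by
      simpa [dec] using h (0, 0, 1) (by decide)
    have k2 : Fq t 1 (-1) 1 = 1 := by
      simpa [dec] using h (0, 1, 0) (by decide)
    have k3 : Fq t 1 (-1) (-1) = 1 := by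
      simpa [dec] using h (0, 1, 1) (by decide)
    have k4 : Fq t (-1) 1 1 = 1 := by
      simpa [dec] using h (1, 0, 0) (by decide)
    have k5 : Fq t (-1) 1 (-1) = 1 := by
      simpa [dec] using h (1, 0, 1) (by decide)
    have k6 : Fq t (-1) (-1) 1 = 1 := by
      simpa [dec] using h (1, 1, 0) (by decide)
    have k7 : Fq t (-1) (-1) (-1) = 1 := by
      simpa [dec] using h (1, 1, 1) (by decide)
    have km : Fq t 1 1 1 = 1 := by
      have e0 := k1
      have e1 := k2
      have e2 := k3
      have e3 := k4
      have e4 := k5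
      have e5 := k6
      have e6 := k7
      rw [Fq_expand] at e0 e1 e2 e3 e4 e5 e6 ⊢
      linear_combination (1) * e0 + (1) * e1 + (-1) * e2 + (1) * e3 + (-1) * e4 + (-1) * e5 + (1) * e6
    exact extract_offdiag t km k1 k2 k3 k4 k5 k6 k7
  · -- missing (1, 1, -1)
    have k0 : Fq t 1 1 1 = 1 := by
      simpa [dec] using h (0, 0, 0) (by decide)
    have k2 : Fq t 1 (-1) 1 = 1 := by
      simpa [dec] using h (0, 1, 0) (by decide)
    have k3 : Fq t 1 (-1) (-1) = 1 := by
      simpa [dec] using h (0, 1, 1) (by decide)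
    have k4 : Fq t (-1) 1 1 = 1 := by
      simpa [dec] using h (1, 0, 0) (by decide)
    have k5 : Fq t (-1) 1 (-1) = 1 := by
      simpa [dec] using h (1, 0, 1) (by decide)
    have k6 : Fq t (-1) (-1) 1 = 1 := by
      simpa [dec] using h (1, 1, 0) (by decide)
    have k7 : Fq t (-1) (-1) (-1) = 1 := by
      simpa [dec] using h (1, 1, 1) (by decide)
    have km : Fq t 1 1 (-1) = 1 := by
      have e0 := k0
      have e1 := k2
      have e2 := k3
      have e3 := k4
      have e4 := k5
      have e5 := k6
      have e6 := k7
      rw [Fq_expand] at e0 e1 e2 e3 e4 e5 e6 ⊢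
      linear_combination (1) * e0 + (-1) * e1 + (1) * e2 + (-1) * e3 + (1) * e4 + (1) * e5 + (-1) * e6
    exact extract_offdiag t k0 km k2 k3 k4 k5 k6 k7
  · -- missing (1, -1, 1)
    have k0 : Fq t 1 1 1 = 1 := by
      simpa [dec] using h (0, 0, 0) (by decide)
    have k1 : Fq t 1 1 (-1) = 1 := by
      simpa [dec] using h (0, 0, 1) (by decide)
    have k3 : Fq t 1 (-1) (-1) = 1 := by
      simpa [dec] using h (0, 1, 1) (by decide)
    have k4 : Fq t (-1) 1 1 = 1 := by
      simpa [dec] using h (1, 0, 0) (by decide)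
    have k5 : Fq t (-1) 1 (-1) = 1 := by
      simpa [dec] using h (1, 0, 1) (by decide)
    have k6 : Fq t (-1) (-1) 1 = 1 := by
      simpa [dec] using h (1, 1, 0) (by decide)
    have k7 : Fq t (-1) (-1) (-1) = 1 := by
      simpa [dec] using h (1, 1, 1) (by decide)
    have km : Fq t 1 (-1) 1 = 1 := by
      have e0 := k0
      have e1 := k1
      have e2 := k3
      have e3 := k4
      have e4 := k5
      have e5 := k6
      have e6 := k7
      rw [Fq_expand] at e0 e1 e2 e3 e4 e5 e6 ⊢
      linear_combination (1) * e0 + (-1) * e1 + (1) * e2 + (-1) * e3 + (1) * e4 + (1) * e5 + (-1) * e6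
    exact extract_offdiag t k0 k1 km k3 k4 k5 k6 k7
  · -- missing (1, -1, -1)
    have k0 : Fq t 1 1 1 = 1 := by
      simpa [dec] using h (0, 0, 0) (by decide)
    have k1 : Fq t 1 1 (-1) = 1 := by
      simpa [dec] using h (0, 0, 1) (by decide)
    have k2 : Fq t 1 (-1) 1 = 1 := by
      simpa [dec] using h (0, 1, 0) (by decide)
    have k4 : Fq t (-1) 1 1 = 1 := by
      simpa [dec] using h (1, 0, 0) (by decide)
    have k5 : Fq t (-1) 1 (-1) = 1 := by
      simpa [dec] using h (1, 0, 1) (by decide)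
    have k6 : Fq t (-1) (-1) 1 = 1 := by
      simpa [dec] using h (1, 1, 0) (by decide)
    have k7 : Fq t (-1) (-1) (-1) = 1 := by
      simpa [dec] using h (1, 1, 1) (by decide)
    have km : Fq t 1 (-1) (-1) = 1 := by
      have e0 := k0
      have e1 := k1
      have e2 := k2
      have e3 := k4
      have e4 := k5
      have e5 := k6
      have e6 := k7
      rw [Fq_expand] at e0 e1 e2 e3 e4 e5 e6 ⊢
      linear_combination (-1) * e0 + (1) * e1 + (1) * e2 + (1) * e3 + (-1) * e4 + (-1) * e5 + (1) * e6
    exact extract_offdiag t k0 k1 k2 km k4 k5 k6 k7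
  · -- missing (-1, 1, 1)
    have k0 : Fq t 1 1 1 = 1 := by
      simpa [dec] using h (0, 0, 0) (by decide)
    have k1 : Fq t 1 1 (-1) = 1 := by
      simpa [dec] using h (0, 0, 1) (by decide)
    have k2 : Fq t 1 (-1) 1 = 1 := by
      simpa [dec] using h (0, 1, 0) (by decide)
    have k3 : Fq t 1 (-1) (-1) = 1 := by
      simpa [dec] using h (0, 1, 1) (by decide)
    have k5 : Fq t (-1) 1 (-1) = 1 := by
      simpa [dec] using h (1, 0, 1) (by decide)
    have k6 : Fq t (-1) (-1) 1 = 1 := by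
      simpa [dec] using h (1, 1, 0) (by decide)
    have k7 : Fq t (-1) (-1) (-1) = 1 := by
      simpa [dec] using h (1, 1, 1) (by decide)
    have km : Fq t (-1) 1 1 = 1 := by
      have e0 := k0
      have e1 := k1
      have e2 := k2
      have e3 := k3
      have e4 := k5
      have e5 := k6
      have e6 := k7
      rw [Fq_expand] at e0 e1 e2 e3 e4 e5 e6 ⊢
      linear_combination (1) * e0 + (-1) * e1 + (-1) * e2 + (1) * e3 + (1) * e4 + (1) * e5 + (-1) * e6
    exact extract_offdiag t k0 k1 k2 k3 km k5 k6 k7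
  · -- missing (-1, 1, -1)
    have k0 : Fq t 1 1 1 = 1 := by
      simpa [dec] using h (0, 0, 0) (by decide)
    have k1 : Fq t 1 1 (-1) = 1 := by
      simpa [dec] using h (0, 0, 1) (by decide)
    have k2 : Fq t 1 (-1) 1 = 1 := by
      simpa [dec] using h (0, 1, 0) (by decide)
    have k3 : Fq t 1 (-1) (-1) = 1 := by
      simpa [dec] using h (0, 1, 1) (by decide)
    have k4 : Fq t (-1) 1 1 = 1 := by
      simpa [dec] using h (1, 0, 0) (by decide)
    have k6 : Fq t (-1) (-1) 1 = 1 := by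
      simpa [dec] using h (1, 1, 0) (by decide)
    have k7 : Fq t (-1) (-1) (-1) = 1 := by
      simpa [dec] using h (1, 1, 1) (by decide)
    have km : Fq t (-1) 1 (-1) = 1 := by
      have e0 := k0
      have e1 := k1
      have e2 := k2
      have e3 := k3
      have e4 := k4
      have e5 := k6
      have e6 := k7
      rw [Fq_expand] at e0 e1 e2 e3 e4 e5 e6 ⊢
      linear_combination (-1) * e0 + (1) * e1 + (1) * e2 + (-1) * e3 + (1) * e4 + (-1) * e5 + (1) * e6
    exact extract_offdiag t k0 k1 k2 k3 k4 km k6 k7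
  · -- missing (-1, -1, 1)
    have k0 : Fq t 1 1 1 = 1 := by
      simpa [dec] using h (0, 0, 0) (by decide)
    have k1 : Fq t 1 1 (-1) = 1 := by
      simpa [dec] using h (0, 0, 1) (by decide)
    have k2 : Fq t 1 (-1) 1 = 1 := by
      simpa [dec] using h (0, 1, 0) (by decide)
    have k3 : Fq t 1 (-1) (-1) = 1 := by
      simpa [dec] using h (0, 1, 1) (by decide)
    have k4 : Fq t (-1) 1 1 = 1 := by
      simpa [dec] using h (1, 0, 0) (by decide)
    have k5 : Fq t (-1) 1 (-1) = 1 := by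
      simpa [dec] using h (1, 0, 1) (by decide)
    have k7 : Fq t (-1) (-1) (-1) = 1 := by
      simpa [dec] using h (1, 1, 1) (by decide)
    have km : Fq t (-1) (-1) 1 = 1 := by
      have e0 := k0
      have e1 := k1
      have e2 := k2
      have e3 := k3
      have e4 := k4
      have e5 := k5
      have e6 := k7
      rw [Fq_expand] at e0 e1 e2 e3 e4 e5 e6 ⊢
      linear_combination (-1) * e0 + (1) * e1 + (1) * e2 + (-1) * e3 + (1) * e4 + (-1) * e5 + (1) * e6
    exact extract_offdiag t k0 k1 k2 k3 k4 k5 km k7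
  · -- missing (-1, -1, -1)
    have k0 : Fq t 1 1 1 = 1 := by
      simpa [dec] using h (0, 0, 0) (by decide)
    have k1 : Fq t 1 1 (-1) = 1 := by
      simpa [dec] using h (0, 0, 1) (by decide)
    have k2 : Fq t 1 (-1) 1 = 1 := by
      simpa [dec] using h (0, 1, 0) (by decide)
    have k3 : Fq t 1 (-1) (-1) = 1 := by
      simpa [dec] using h (0, 1, 1) (by decide)
    have k4 : Fq t (-1) 1 1 = 1 := by
      simpa [dec] using h (1, 0, 0) (by decide)
    have k5 : Fq t (-1) 1 (-1) = 1 := by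
      simpa [dec] using h (1, 0, 1) (by decide)
    have k6 : Fq t (-1) (-1) 1 = 1 := by
      simpa [dec] using h (1, 1, 0) (by decide)
    have km : Fq t (-1) (-1) (-1) = 1 := by
      have e0 := k0
      have e1 := k1
      have e2 := k2
      have e3 := k3
      have e4 := k4
      have e5 := k5
      have e6 := k6
      rw [Fq_expand] at e0 e1 e2 e3 e4 e5 e6 ⊢
      linear_combination (1) * e0 + (-1) * e1 + (-1) * e2 + (1) * e3 + (-1) * e4 + (1) * e5 + (1) * e6
    exact extract_offdiag t k0 k1 k2 k3 k4 k5 k6 km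

/-! ### Linear algebra helpers -/

lemma Bf_sum_left {m : ℕ} (f : Fin m → ℝ) (x : Fin m → V4) (y : V4) :
    Bf (∑ i, f i • x i) y = ∑ i, f i * Bf (x i) y := by
  simp only [← Bl_apply, map_sum, map_smul, LinearMap.sum_apply, LinearMap.smul_apply,
    smul_eq_mul]

lemma Bf_sum_right {m : ℕ} (f : Fin m → ℝ) (x : Fin m → V4) (y : V4) :
    Bf y (∑ i, f i • x i) = ∑ i, f i * Bf y (x i) := by
  simp only [← Bl_apply, map_sum, map_smul, smul_eq_mul]

lemma Bf_sum_sum {m : ℕ} (f g : Fin m → ℝ) (x y : Fin m → V4) :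
    Bf (∑ i, f i • x i) (∑ j, g j • y j) = ∑ i, ∑ j, f i * g j * Bf (x i) (y j) := by
  rw [Bf_sum_left]
  refine Finset.sum_congr rfl fun i _ => ?_
  rw [Bf_sum_right, Finset.mul_sum]
  refine Finset.sum_congr rfl fun j _ => ?_
  ring

lemma finrank_V4 : Module.finrank ℝ V4 = 4 := by
  rw [Module.finrank_pi]
  simp

lemma perp_all_eq_zero {w : Fin 4 → V4} (hw : LinearIndependent ℝ w) {x : V4}
    (hx : ∀ i, Bf x (w i) = 0) : x = 0 := by
  have hcard : Fintype.card (Fin 4) = Module.finrank ℝ V4 := by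
    rw [finrank_V4]; simp
  let b := basisOfLinearIndependentOfCardEqFinrank hw hcard
  have hb : ⇑b = w := coe_basisOfLinearIndependentOfCardEqFinrank hw hcard
  apply Bf_nondeg
  intro y
  have hrepr := Module.Basis.sum_repr b y
  calc Bf x y = Bf x (∑ i, b.repr y i • b i) := by rw [hrepr]
  _ = ∑ i, b.repr y i * Bf x (b i) := Bf_sum_right _ _ _
  _ = 0 := by
      refine Finset.sum_eq_zero fun i _ => ?_
      rw [hb]
      rw [hx i]
      ring

lemma q_ne_zero {x : V4} (h : Bf x x = 1) : x ≠ 0 := by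
  intro h0
  rw [h0] at h
  simp [Bf] at h

/-- Two normalized vectors with a 2-term linear relation are equal up to sign. -/
lemma two_term_relation {x y : V4} (hqx : Bf x x = 1) (hqy : Bf y y = 1)
    {cx cy : ℝ} (hcx : cx ≠ 0) (h : cx • x + cy • y = 0) : x = y ∨ x = -y := by
  have hx : x = (-(cy)/cx) • y := by
    apply smul_right_injective V4 hcx
    show cx • x = cx • ((-(cy)/cx) • y)
    have hc : cx • ((-(cy)/cx) • y) = (-(cy)) • y := by
      rw [smul_smul]
      congr 1
      field_simp
    rw [hc]
    apply eq_of_sub_eq_zero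
    rw [← h]
    module
  set cc := -(cy)/cx with hcc
  have hq : cc * cc = 1 := by
    have : Bf x x = cc * (cc * Bf y y) := by
      rw [hx, Bf_smul_left, Bf_smul_right]
    rw [hqx, hqy] at this
    rw [this]; ring
  have : (cc - 1) * (cc + 1) = 0 := by linear_combination hq
  rcases mul_eq_zero.1 this with h'|h'
  · left
    rw [hx]
    have : cc = 1 := by linarith
    rw [this, one_smul]
  · right
    rw [hx]
    have : cc = -1 := by linarith
    rw [this, neg_one_smul]

/-- The algebraic heart: a + b = 1, a² + 2abg + b² = 1, a,b ≠ 0 implies g = 1. -/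
lemma key_alg {a b g : ℝ} (ha : a ≠ 0) (hb : b ≠ 0) (h1 : a + b = 1)
    (h2 : a*a + 2*(a*b)*g + b*b = 1) : g = 1 := by
  have h3 : (a*b) * (1 - g) = 0 := by
    linear_combination ((a + b + 1)/2) * h1 - (1/2) * h2
  rcases mul_eq_zero.1 h3 with h'|h'
  · rcases mul_eq_zero.1 h' with h''|h''
    · exact absurd h'' ha
    · exact absurd h'' hb
  · linarith

/-- Core case: a 3-term linear relation among the lifts. -/
lemma core_Ia (u : Fin 4 → V4) (v : Fin 7 → V4)
    (hqu : ∀ i, Bf (u i) (u i) = 1)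
    (hqv : ∀ k, Bf (v k) (v k) = 1)
    (hpm : ∀ k i, IsPM (Bf (v k) (u i)))
    (huu : ∀ a b, a ≠ b → u a ≠ u b ∧ u a ≠ -u b)
    (hvv : ∀ k l, k ≠ l → v k ≠ v l ∧ v k ≠ -v l)
    (i j k l : Fin 4) (hij : i ≠ j)
    (huniv : ∀ m : Fin 4, m = i ∨ m = j ∨ m = k ∨ m = l)
    (α β : ℝ) (hα : α ≠ 0) (hβ : β ≠ 0)
    (hrel : u k = α • u i + β • u j) :
    ∃ n : V4, n ≠ 0 ∧ Bf n n = 0 ∧ (∀ m, Bf (u m) n = 0) ∧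
      (∀ a b, a ≠ b → IsPM (Bf (u a) (u b))) := by
  set si := Bf (v 0) (u i) with hsi_def
  set sj := Bf (v 0) (u j) with hsj_def
  set sk := Bf (v 0) (u k) with hsk_def
  have hsi : IsPM si := hpm 0 i
  have hsj : IsPM sj := hpm 0 j
  have hsk : IsPM sk := hpm 0 k
  have hsi2 : si * si = 1 := hsi.sq
  have hsj2 : sj * sj = 1 := hsj.sq
  have hsk2 : sk * sk = 1 := hsk.sq
  set G := Bf (u i) (u j) with hG_def
  have hsum1 : sk = α * si + β * sj := by
    rw [hsk_def, hrel, Bf_add_right, Bf_smul_right, Bf_smul_right, ← hsi_def, ← hsj_def]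
  have h1 : α * (si * sk) + β * (sj * sk) = 1 := by
    linear_combination (-sk) * hsum1 + hsk2
  have hα' : α * (si * sk) ≠ 0 := by
    intro h
    rcases mul_eq_zero.1 h with h'|h'
    · exact hα h'
    · exact (hsi.mul hsk).ne_zero h'
  have hβ' : β * (sj * sk) ≠ 0 := by
    intro h
    rcases mul_eq_zero.1 h with h'|h'
    · exact hβ h'
    · exact (hsj.mul hsk).ne_zero h'
  have hqk : α*α + 2*(α*β)*G + β*β = 1 := by
    have h := hqu k
    rw [hrel] at h
    simp only [Bf_add_left, Bf_add_right, Bf_smul_left, Bf_smul_right] at h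
    rw [Bf_symm (u j) (u i), ← hG_def, hqu i, hqu j] at h
    linear_combination h
  have hg : si * sj * G = 1 := by
    refine key_alg hα' hβ' h1 ?_
    linear_combination hqk + (α^2*(sk*sk))*hsi2 + (α^2)*hsk2 + (β^2*(sk*sk))*hsj2 + (β^2)*hsk2
      + (2*α*β*G*(sj*sj)*(sk*sk))*hsi2 + (2*α*β*G*(sk*sk))*hsj2 + (2*α*β*G)*hsk2
  have hGval : G = si * sj := by
    linear_combination (si*sj)*hg - (sj*sj*G)*hsi2 - G*hsj2
  set n := sj • u j - si • u i with hn_def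
  have hqn : Bf n n = 0 := by
    rw [hn_def]
    simp only [Bf_sub_left, Bf_sub_right, Bf_smul_left, Bf_smul_right]
    rw [Bf_symm (u j) (u i), ← hG_def, hqu i, hqu j]
    linear_combination hsi2 + hsj2 - 2*hg
  have hoi : Bf (u i) n = 0 := by
    rw [hn_def, Bf_sub_right, Bf_smul_right, Bf_smul_right, ← hG_def, hqu i]
    linear_combination si*hg - (sj*G)*hsi2
  have hoj : Bf (u j) n = 0 := by
    rw [hn_def, Bf_sub_right, Bf_smul_right, Bf_smul_right, hqu j, Bf_symm (u j) (u i), ← hG_def]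
    linear_combination (-sj)*hg + (si*G)*hsj2
  have hok : Bf (u k) n = 0 := by
    rw [hrel, Bf_add_left, Bf_smul_left, Bf_smul_left, hoi, hoj]
    ring
  have hnne : n ≠ 0 := by
    intro h0
    have hcomb : sj • u j + (-si) • u i = 0 := by
      rw [neg_smul, ← sub_eq_add_neg, ← hn_def]
      exact h0
    rcases two_term_relation (hqu j) (hqu i) hsj.ne_zero hcomb with h'|h'
    · exact (huu j i (Ne.symm hij)).1 h'
    · exact (huu j i (Ne.symm hij)).2 h'
  -- every solution is a member of the pencil through (si • u i) in direction n
  have hsol : ∀ k' : Fin 7, ∃ ε cc : ℝ, IsPM ε ∧ ε • v k' = si • u i + cc • n := by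
    intro k'
    set ti := Bf (v k') (u i) with hti_def
    set tj := Bf (v k') (u j) with htj_def
    set tk := Bf (v k') (u k) with htk_def
    have hti : IsPM ti := hpm k' i
    have htj : IsPM tj := hpm k' j
    have htk : IsPM tk := hpm k' k
    have hti2 : ti * ti = 1 := hti.sq
    have htj2 : tj * tj = 1 := htj.sq
    have hsum2 : tk = α * ti + β * tj := by
      rw [htk_def, hrel, Bf_add_right, Bf_smul_right, Bf_smul_right, ← hti_def, ← htj_def]
    have hτrel : sk * tk = (α*(si*sk)) * (si*ti) + (β*(sj*sk)) * (sj*tj) := by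
      linear_combination sk*hsum2 - (α*ti*sk)*hsi2 - (β*tj*sk)*hsj2
    have hτk : IsPM (sk * tk) := hsk.mul htk
    have hττ : si * ti = sj * tj := by
      rcases hsi.mul hti with h'|h' <;> rcases hsj.mul htj with h''|h''
      · rw [h', h'']
      · exfalso
        rw [h', h''] at hτrel
        rcases hτk with h3|h3 <;> rw [h3] at hτrel
        · exact hβ' (by linarith)
        · exact hα' (by linarith)
      · exfalso
        rw [h', h''] at hτrel
        rcases hτk with h3|h3 <;> rw [h3] at hτrel
        · exact hα' (by linarith)
        · exact hβ' (by linarith)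
      · rw [h', h'']
    set ε := si * ti with hε_def
    have hεpm : IsPM ε := hsi.mul hti
    have hw1 : Bf (ε • v k') (si • u i) = 1 := by
      rw [Bf_smul_left, Bf_smul_right, ← hti_def, hε_def]
      linear_combination (ti*ti)*hsi2 + hti2
    have hqw : Bf (ε • v k') (ε • v k') = 1 := by
      rw [Bf_smul_left, Bf_smul_right, hqv k']
      linear_combination hεpm.sq
    have hqz : Bf (ε • v k' - si • u i) (ε • v k' - si • u i) = 0 := by
      simp only [Bf_sub_left, Bf_sub_right]
      rw [hqw, hw1, Bf_symm (si • u i) (ε • v k'), hw1]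
      rw [Bf_smul_left, Bf_smul_right, hqu i]
      linear_combination hsi2
    have hzn : Bf (ε • v k' - si • u i) n = 0 := by
      simp only [Bf_sub_left, Bf_smul_left]
      rw [hoi]
      rw [hn_def]
      simp only [Bf_sub_right, Bf_smul_right]
      rw [← hti_def, ← htj_def]
      linear_combination (-ε) * hττ
    obtain ⟨cc, hcc⟩ := null_orth_null hnne hqn hqz hzn
    exact ⟨ε, cc, hεpm, (sub_eq_iff_eq_add.1 hcc).trans (add_comm _ _)⟩
  obtain ⟨ε0, c0, hε0, he0⟩ := hsol 0
  obtain ⟨ε1, c1, hε1, he1⟩ := hsol 1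
  obtain ⟨ε2, c2, hε2, he2⟩ := hsol 2
  have hcne : ∀ (a b : Fin 7) (εa εb ca cb : ℝ), a ≠ b → IsPM εa → IsPM εb →
      εa • v a = si • u i + ca • n → εb • v b = si • u i + cb • n → ca ≠ cb := by
    intro a b εa εb ca cb hab hεa hεb hea heb hcc
    rw [hcc] at hea
    have heq : εa • v a = εb • v b := by rw [hea, heb]
    have hva : v a = (εa * εb) • v b := by
      calc v a = (εa*εa) • v a := by rw [hεa.sq, one_smul]
      _ = εa • (εa • v a) := by rw [smul_smul]
      _ = εa • (εb • v b) := by rw [heq]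
      _ = (εa*εb) • v b := by rw [smul_smul]
    rcases hεa.mul hεb with h'|h'
    · rw [h', one_smul] at hva
      exact (hvv a b hab).1 hva
    · rw [h', neg_one_smul] at hva
      exact (hvv a b hab).2 hva
  have hc01 : c0 ≠ c1 := hcne 0 1 ε0 ε1 c0 c1 (by decide) hε0 hε1 he0 he1
  have hc02 : c0 ≠ c2 := hcne 0 2 ε0 ε2 c0 c2 (by decide) hε0 hε2 he0 he2
  have hc12 : c1 ≠ c2 := hcne 1 2 ε1 ε2 c1 c2 (by decide) hε1 hε2 he1 he2
  by_cases hD : Bf (u l) n = 0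
  · -- good case: produce the conclusion
    have hX : Bf (u l) (u i) = si * (ε0 * Bf (v 0) (u l)) := by
      have h' := congrArg (Bf (u l)) he0
      simp only [Bf_add_right, Bf_smul_right] at h'
      rw [hD, Bf_symm (u l) (v 0)] at h'
      linear_combination (-si)*h' - (Bf (u l) (u i))*hsi2
    have hXpm : IsPM (Bf (u l) (u i)) := by
      rw [hX]
      exact hsi.mul (hε0.mul (hpm 0 l))
    have hsjuj : sj • u j = si • u i + n := by
      rw [hn_def]
      abel
    have hY : Bf (u l) (u j) = sj * (si * Bf (u l) (u i)) := by
      have h' := congrArg (Bf (u l)) hsjuj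
      simp only [Bf_add_right, Bf_smul_right] at h'
      rw [hD] at h'
      linear_combination sj*h' - (Bf (u l) (u j))*hsj2
    have hYpm : IsPM (Bf (u l) (u j)) := by
      rw [hY]
      exact hsj.mul (hsi.mul hXpm)
    have hval : α + β * (si * sj) = si * sk := by
      linear_combination (si*sk)*h1 - (α*(sk*sk))*hsi2 - α*hsk2 - (β*si*sj)*hsk2
    have hZ : Bf (u l) (u k) = (si*sk) * Bf (u l) (u i) := by
      rw [hrel, Bf_add_right, Bf_smul_right, Bf_smul_right, hY]
      linear_combination (Bf (u l) (u i)) * hval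
    have hZpm : IsPM (Bf (u l) (u k)) := by
      rw [hZ]
      exact (hsi.mul hsk).mul hXpm
    have hGpm : IsPM (Bf (u i) (u j)) := by
      rw [← hG_def, hGval]
      exact hsi.mul hsj
    have hik : Bf (u i) (u k) = si * sk := by
      rw [hrel, Bf_add_right, Bf_smul_right, Bf_smul_right, hqu i, ← hG_def]
      linear_combination hval + β*hGval
    have hikpm : IsPM (Bf (u i) (u k)) := by
      rw [hik]; exact hsi.mul hsk
    have hval2 : α * (si*sj) + β = sj * sk := by
      linear_combination (sj*sk)*h1 - (α*si*sj)*hsk2 - (β*(sk*sk))*hsj2 - β*hsk2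
    have hjk : Bf (u j) (u k) = sj * sk := by
      rw [hrel, Bf_add_right, Bf_smul_right, Bf_smul_right, hqu j, Bf_symm (u j) (u i), ← hG_def]
      linear_combination hval2 + α*hGval
    have hjkpm : IsPM (Bf (u j) (u k)) := by
      rw [hjk]; exact hsj.mul hsk
    have hsym : ∀ a b : Fin 4, IsPM (Bf (u a) (u b)) → IsPM (Bf (u b) (u a)) := by
      intro a b h
      rwa [Bf_symm]
    have p1 := hGpm
    have p2 := hsym i j hGpm
    have p3 := hikpm
    have p4 := hsym i k hikpm
    have p5 := hjkpm
    have p6 := hsym j k hjkpm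
    have p7 := hXpm
    have p8 := hsym l i hXpm
    have p9 := hYpm
    have p10 := hsym l j hYpm
    have p11 := hZpm
    have p12 := hsym l k hZpm
    refine ⟨n, hnne, hqn, ?_, ?_⟩
    · intro m
      rcases huniv m with rfl|rfl|rfl|rfl
      exacts [hoi, hoj, hok, hD]
    · intro a b hab
      rcases huniv a with rfl|rfl|rfl|rfl <;> rcases huniv b with rfl|rfl|rfl|rfl <;>
        first
          | exact absurd rfl hab
          | assumption
  · -- contradiction: three distinct pencil members with |A + c D| = 1
    exfalso
    have hrho : ∀ (a : Fin 7) (εa ca : ℝ), IsPM εa → εa • v a = si • u i + ca • n →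
        IsPM (si * Bf (u l) (u i) + ca * Bf (u l) n) := by
      intro a εa ca hεa hea
      have h' := congrArg (Bf (u l)) hea
      simp only [Bf_add_right, Bf_smul_right] at h'
      rw [Bf_symm (u l) (v a)] at h'
      have h'' : si * Bf (u l) (u i) + ca * Bf (u l) n = εa * Bf (v a) (u l) := h'.symm
      rw [h'']
      exact hεa.mul (hpm a l)
    have hρ0 := hrho 0 ε0 c0 hε0 he0
    have hρ1 := hrho 1 ε1 c1 hε1 he1
    have hρ2 := hrho 2 ε2 c2 hε2 he2
    have hpaircontra : ∀ x y : ℝ,  x ≠ y →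
        si * Bf (u l) (u i) + x * Bf (u l) n = si * Bf (u l) (u i) + y * Bf (u l) n → False := by
      intro x y hxy hxyeq
      have h9 : (x - y) * Bf (u l) n = 0 := by linear_combination hxyeq
      rcases mul_eq_zero.1 h9 with h9|h9
      · exact hxy (by linarith)
      · exact hD h9
    rcases hρ0 with h0'|h0' <;> rcases hρ1 with h1'|h1' <;> rcases hρ2 with h2'|h2' <;>
      first
        | exact hpaircontra c0 c1 hc01 (by linarith)
        | exact hpaircontra c0 c2 hc02 (by linarith)
        | exact hpaircontra c1 c2 hc12 (by linarith)

lemma Bf_zero_right (x : V4) : Bf x 0 = 0 := by simp [Bf]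

lemma IsPM.eq_of_mul_eq_one {a b : ℝ} (ha : IsPM a) (hb : IsPM b) (h : a * b = 1) : a = b := by
  rcases ha with h1|h1 <;> rcases hb with h2|h2 <;> rw [h1, h2] at h ⊢ <;>
    first | rfl | norm_num at h

/-- Core case: a full-support linear relation with u 0, u 1, u 2 independent. -/
lemma core_Ib (u : Fin 4 → V4) (v : Fin 7 → V4)
    (hqu : ∀ i, Bf (u i) (u i) = 1)
    (hqv : ∀ k, Bf (v k) (v k) = 1)
    (hpm : ∀ k i, IsPM (Bf (v k) (u i)))
    (hvv : ∀ k l, k ≠ l → v k ≠ v l ∧ v k ≠ -v l)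
    (lam : Fin 4 → ℝ) (hlam : ∑ i, lam i • u i = 0) (hlamne : ∀ i, lam i ≠ 0)
    (hLI3 : ∀ a b c : ℝ, a • u 0 + b • u 1 + c • u 2 = 0 → a = 0 ∧ b = 0 ∧ c = 0) :
    ∃ n : V4, n ≠ 0 ∧ Bf n n = 0 ∧ (∀ m, Bf (u m) n = 0) ∧
      (∀ a b, a ≠ b → IsPM (Bf (u a) (u b))) := by
  classical
  -- a nonzero vector orthogonal to u 0, u 1, u 2
  obtain ⟨n, hnne, hn0, hn1, hn2⟩ :
      ∃ n : V4, n ≠ 0 ∧ Bf n (u 0) = 0 ∧ Bf n (u 1) = 0 ∧ Bf n (u 2) = 0 := by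
    set Ψ : V4 →ₗ[ℝ] (Fin 3 → ℝ) :=
      LinearMap.pi (fun j => (LinearMap.flip Bl) (u (![0, 1, 2] j))) with hΨ
    have hrk := LinearMap.finrank_range_add_finrank_ker Ψ
    rw [finrank_V4] at hrk
    have hrange : Module.finrank ℝ (LinearMap.range Ψ) ≤ 3 := by
      have h := Submodule.finrank_le (LinearMap.range Ψ)
      rw [Module.finrank_pi] at h
      simpa using h
    have hkerpos : LinearMap.ker Ψ ≠ ⊥ := by
      intro h
      rw [h, finrank_bot] at hrk
      omega
    obtain ⟨n, hn, hn0⟩ := (Submodule.ne_bot_iff _).1 hkerpos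
    have hj : ∀ j : Fin 3, Bf n (u (![0, 1, 2] j)) = 0 := by
      intro j
      have h := congrFun (LinearMap.mem_ker.1 hn) j
      simpa [hΨ, LinearMap.pi_apply, LinearMap.flip_apply, Bl_apply] using h
    refine ⟨n, hn0, ?_, ?_, ?_⟩
    · simpa using hj 0
    · simpa using hj 1
    · simpa using hj 2
  have hn3 : Bf n (u 3) = 0 := by
    have h2 : Bf n (∑ i2, lam i2 • u i2) = 0 := by rw [hlam, Bf_zero_right]
    rw [Bf_sum_right, Fin.sum_univ_four, hn0, hn1, hn2] at h2
    have h3 : lam 3 * Bf n (u 3) = 0 := by linarith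
    rcases mul_eq_zero.1 h3 with h'|h'
    · exact absurd h' (hlamne 3)
    · exact h'
  have horthu : ∀ i2 : Fin 4, Bf (u i2) n = 0 := by
    intro i2
    rw [Bf_symm]
    fin_cases i2
    exacts [hn0, hn1, hn2, hn3]
  -- uniqueness: everything orthogonal to u0 u1 u2 is a multiple of n
  obtain ⟨mm, hmm⟩ : ∃ mm, Bf n mm ≠ 0 := by
    by_contra h
    push_neg at h
    exact hnne (Bf_nondeg n h)
  have hgLI : LinearIndependent ℝ (![u 0, u 1, u 2, mm]) := by
    rw [Fintype.linearIndependent_iff]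
    intro a ha
    rw [Fin.sum_univ_four] at ha
    simp only [Matrix.cons_val_zero, Matrix.cons_val_one, Matrix.head_cons,
      Matrix.cons_val_two, Matrix.tail_cons, Matrix.cons_val_three] at ha
    have h3 : a 3 = 0 := by
      have h' := congrArg (fun x => Bf n x) ha
      simp only [Bf_add_right, Bf_smul_right, Bf_zero_right] at h'
      rw [hn0, hn1, hn2] at h'
      have h'' : a 3 * Bf n mm = 0 := by linarith
      rcases mul_eq_zero.1 h'' with h''|h''
      · exact h''
      · exact absurd h'' hmm
    rw [h3, zero_smul, add_zero] at ha
    obtain ⟨e0, e1, e2⟩ := hLI3 (a 0) (a 1) (a 2) ha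
    intro i2
    fin_cases i2
    exacts [e0, e1, e2, h3]
  have huniq : ∀ z : V4, Bf z (u 0) = 0 → Bf z (u 1) = 0 → Bf z (u 2) = 0 →
      ∃ cc : ℝ, z = cc • n := by
    intro z e0 e1 e2
    refine ⟨Bf z mm / Bf n mm, ?_⟩
    have g0 : Bf (z - (Bf z mm / Bf n mm) • n) (u 0) = 0 := by
      rw [Bf_sub_left, Bf_smul_left, e0, hn0]; ring
    have g1 : Bf (z - (Bf z mm / Bf n mm) • n) (u 1) = 0 := by
      rw [Bf_sub_left, Bf_smul_left, e1, hn1]; ring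
    have g2 : Bf (z - (Bf z mm / Bf n mm) • n) (u 2) = 0 := by
      rw [Bf_sub_left, Bf_smul_left, e2, hn2]; ring
    have g3 : Bf (z - (Bf z mm / Bf n mm) • n) mm = 0 := by
      rw [Bf_sub_left, Bf_smul_left]
      field_simp
      ring
    have hz' : ∀ i2 : Fin 4, Bf (z - (Bf z mm / Bf n mm) • n) (![u 0, u 1, u 2, mm] i2) = 0 := by
      intro i2
      fin_cases i2
      · exact g0
      · exact g1
      · exact g2
      · exact g3
    have hz0 := perp_all_eq_zero hgLI hz'
    exact sub_eq_zero.1 hz0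
  -- normalized sign data
  have hpmn : ∀ (k : Fin 7) (i2 : Fin 4), IsPM (Bf (v k) (u 0) * Bf (v k) (u i2)) :=
    fun k i2 => (hpm k 0).mul (hpm k i2)
  have htt0 : ∀ k : Fin 7, Bf (v k) (u 0) * Bf (v k) (u 0) = 1 := fun k => (hpm k 0).sq
  have hort : ∀ k : Fin 7, lam 0 * Bf (v k) (u 0) + lam 1 * Bf (v k) (u 1)
      + lam 2 * Bf (v k) (u 2) + lam 3 * Bf (v k) (u 3) = 0 := by
    intro k
    have h2 : Bf (v k) (∑ i2, lam i2 • u i2) = 0 := by rw [hlam, Bf_zero_right]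
    rw [Bf_sum_right, Fin.sum_univ_four] at h2
    exact h2
  -- sign classes
  set cls : Fin 7 → T2 := fun k =>
    (Classical.choose (dec_eq_of_isPM (hpmn k 1)),
     Classical.choose (dec_eq_of_isPM (hpmn k 2)),
     Classical.choose (dec_eq_of_isPM (hpmn k 3))) with hcls
  have hcls1 : ∀ k, dec (cls k).1 = Bf (v k) (u 0) * Bf (v k) (u 1) := fun k =>
    Classical.choose_spec (dec_eq_of_isPM (hpmn k 1))
  have hcls2 : ∀ k, dec (cls k).2.1 = Bf (v k) (u 0) * Bf (v k) (u 2) := fun k =>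
    Classical.choose_spec (dec_eq_of_isPM (hpmn k 2))
  have hcls3 : ∀ k, dec (cls k).2.2 = Bf (v k) (u 0) * Bf (v k) (u 3) := fun k =>
    Classical.choose_spec (dec_eq_of_isPM (hpmn k 3))
  have hclseq : ∀ k l : Fin 7, cls k = cls l →
      ∀ i2 : Fin 4, Bf (v k) (u 0) * Bf (v k) (u i2) = Bf (v l) (u 0) * Bf (v l) (u i2) := by
    intro k l h i2
    have q0 : Bf (v k) (u 0) * Bf (v k) (u 0) = Bf (v l) (u 0) * Bf (v l) (u 0) :=
      (htt0 k).trans (htt0 l).symm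
    have q1 : Bf (v k) (u 0) * Bf (v k) (u 1) = Bf (v l) (u 0) * Bf (v l) (u 1) := by
      rw [← hcls1 k, ← hcls1 l, h]
    have q2 : Bf (v k) (u 0) * Bf (v k) (u 2) = Bf (v l) (u 0) * Bf (v l) (u 2) := by
      rw [← hcls2 k, ← hcls2 l, h]
    have q3 : Bf (v k) (u 0) * Bf (v k) (u 3) = Bf (v l) (u 0) * Bf (v l) (u 3) := by
      rw [← hcls3 k, ← hcls3 l, h]
    fin_cases i2
    exacts [q0, q1, q2, q3]
  have hclseq' : ∀ k l : Fin 7,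
      (∀ i2 : Fin 4, Bf (v k) (u 0) * Bf (v k) (u i2) = Bf (v l) (u 0) * Bf (v l) (u i2)) →
      cls k = cls l := by
    intro k l h
    have e1 : (cls k).1 = (cls l).1 := dec_inj (by rw [hcls1 k, hcls1 l]; exact h 1)
    have e2 : (cls k).2.1 = (cls l).2.1 := dec_inj (by rw [hcls2 k, hcls2 l]; exact h 2)
    have e3 : (cls k).2.2 = (cls l).2.2 := dec_inj (by rw [hcls3 k, hcls3 l]; exact h 3)
    exact Prod.ext e1 (Prod.ext e2 e3)
  by_cases hfib : ∃ x : T2, 3 ≤ (Finset.univ.filter (fun k => cls k = x)).card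
  · -- three solutions in one class
    obtain ⟨x, hx⟩ := hfib
    obtain ⟨s, hs, hscard⟩ := Finset.exists_subset_card_eq hx
    obtain ⟨a, b, c, hab, hac, hbc, hseq⟩ := Finset.card_eq_three.1 hscard
    have hmem : ∀ y ∈ s, cls y = x := fun y hy => (Finset.mem_filter.1 (hs hy)).2
    have hca : cls a = x := hmem a (by rw [hseq]; simp)
    have hcb : cls b = x := hmem b (by rw [hseq]; simp)
    have hcc : cls c = x := hmem c (by rw [hseq]; simp)
    -- normalized solutions
    have hwq : ∀ k : Fin 7, Bf ((Bf (v k) (u 0)) • v k) ((Bf (v k) (u 0)) • v k) = 1 := by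
      intro k
      rw [Bf_smul_left, Bf_smul_right, hqv k]
      linear_combination (hpm k 0).sq
    have hwu : ∀ (k : Fin 7) (i2 : Fin 4),
        Bf ((Bf (v k) (u 0)) • v k) (u i2) = Bf (v k) (u 0) * Bf (v k) (u i2) := by
      intro k i2
      rw [Bf_smul_left]
    have hwne : ∀ k l : Fin 7, k ≠ l →
        (Bf (v k) (u 0)) • v k ≠ (Bf (v l) (u 0)) • v l := by
      intro k l hkl heq
      have hva : v k = (Bf (v k) (u 0) * Bf (v l) (u 0)) • v l := by
        calc v k = (Bf (v k) (u 0) * Bf (v k) (u 0)) • v k := by rw [htt0 k, one_smul]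
        _ = (Bf (v k) (u 0)) • ((Bf (v k) (u 0)) • v k) := by rw [smul_smul]
        _ = (Bf (v k) (u 0)) • ((Bf (v l) (u 0)) • v l) := by rw [heq]
        _ = (Bf (v k) (u 0) * Bf (v l) (u 0)) • v l := by rw [smul_smul]
      rcases (hpm k 0).mul (hpm l 0) with h'|h'
      · rw [h', one_smul] at hva
        exact (hvv k l hkl).1 hva
      · rw [h', neg_one_smul] at hva
        exact (hvv k l hkl).2 hva
    -- differences are multiples of n
    have hdiff : ∀ k l : Fin 7, cls k = cls l →
        ∃ cc : ℝ, (Bf (v l) (u 0)) • v l = (Bf (v k) (u 0)) • v k + cc • n := by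
      intro k l hkl
      have heq := hclseq k l hkl
      obtain ⟨cc, hcc'⟩ := huniq ((Bf (v l) (u 0)) • v l - (Bf (v k) (u 0)) • v k)
        (by rw [Bf_sub_left, hwu, hwu, heq 0]; ring)
        (by rw [Bf_sub_left, hwu, hwu, heq 1]; ring)
        (by rw [Bf_sub_left, hwu, hwu, heq 2]; ring)
      exact ⟨cc, (sub_eq_iff_eq_add.1 hcc').trans (add_comm _ _)⟩
    obtain ⟨c1, hc1⟩ := hdiff a b (hca.trans hcb.symm)
    obtain ⟨c2, hc2⟩ := hdiff a c (hca.trans hcc.symm)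
    have hc1ne : c1 ≠ 0 := by
      intro h
      rw [h, zero_smul, add_zero] at hc1
      exact hwne b a (Ne.symm hab) hc1
    have hc2ne : c2 ≠ 0 := by
      intro h
      rw [h, zero_smul, add_zero] at hc2
      exact hwne c a (Ne.symm hac) hc2
    have hc12 : c1 ≠ c2 := by
      intro h
      rw [h] at hc1
      rw [← hc2] at hc1
      exact hwne b c hbc hc1
    -- the direction n is null and orthogonal to the base point
    have hexp : ∀ (l : Fin 7) (cc : ℝ),
        (Bf (v l) (u 0)) • v l = (Bf (v a) (u 0)) • v a + cc • n →
        2 * (Bf (v a) (u 0) * Bf (v a) n) * cc + cc * cc * Bf n n = 0 := by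
      intro l cc h
      have h' : Bf ((Bf (v a) (u 0)) • v a + cc • n) ((Bf (v a) (u 0)) • v a + cc • n) = 1 := by
        rw [← h]; exact hwq l
      simp only [Bf_add_left, Bf_add_right, Bf_smul_left, Bf_smul_right] at h'
      rw [Bf_symm n (v a)] at h'
      have h'' := hwq a
      rw [Bf_smul_left, Bf_smul_right] at h''
      linear_combination h' - h''
    have he1 := hexp b c1 hc1
    have he2 := hexp c c2 hc2
    have hqn : Bf n n = 0 := by
      have h9 : (c1 - c2) * (c1 * c2 * Bf n n) = 0 := by
        linear_combination c2 * he1 - c1 * he2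
      rcases mul_eq_zero.1 h9 with h'|h'
      · exact absurd (by linarith) hc12
      · rcases mul_eq_zero.1 h' with h''|h''
        · rcases mul_eq_zero.1 h'' with h3|h3
          · exact absurd h3 hc1ne
          · exact absurd h3 hc2ne
        · exact h''
    have hwan : Bf (v a) (u 0) * Bf (v a) n = 0 := by
      have h9 : c1 * (2 * (Bf (v a) (u 0) * Bf (v a) n)) = 0 := by
        linear_combination he1 - (c1*c1)*hqn
      rcases mul_eq_zero.1 h9 with h'|h'
      · exact absurd h' hc1ne
      · linarith
    -- each u i2 normalized is in the pencil
    have hzi : ∀ i2 : Fin 4, ∃ d : ℝ,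
        (Bf (v a) (u 0) * Bf (v a) (u i2)) • u i2 = (Bf (v a) (u 0)) • v a + d • n := by
      intro i2
      have hpm2 : IsPM (Bf (v a) (u 0) * Bf (v a) (u i2)) := hpmn a i2
      have hqz : Bf ((Bf (v a) (u 0) * Bf (v a) (u i2)) • u i2 - (Bf (v a) (u 0)) • v a)
          ((Bf (v a) (u 0) * Bf (v a) (u i2)) • u i2 - (Bf (v a) (u 0)) • v a) = 0 := by
        simp only [Bf_sub_left, Bf_sub_right, Bf_smul_left, Bf_smul_right]
        rw [Bf_symm (u i2) (v a), hqu i2, hqv a]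
        linear_combination (htt0 a) - hpm2.sq
      have hzn : Bf ((Bf (v a) (u 0) * Bf (v a) (u i2)) • u i2 - (Bf (v a) (u 0)) • v a) n = 0 := by
        simp only [Bf_sub_left, Bf_smul_left]
        rw [horthu i2, hwan]
        ring
      obtain ⟨d, hd⟩ := null_orth_null hnne hqn hqz hzn
      exact ⟨d, (sub_eq_iff_eq_add.1 hd).trans (add_comm _ _)⟩
    have hpair : ∀ a2 b2 : Fin 4, a2 ≠ b2 → IsPM (Bf (u a2) (u b2)) := by
      intro a2 b2 _
      obtain ⟨da, hda⟩ := hzi a2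
      obtain ⟨db, hdb⟩ := hzi b2
      have h' : Bf ((Bf (v a) (u 0) * Bf (v a) (u a2)) • u a2)
          ((Bf (v a) (u 0) * Bf (v a) (u b2)) • u b2) = 1 := by
        rw [hda, hdb]
        simp only [Bf_add_left, Bf_add_right, Bf_smul_left, Bf_smul_right]
        rw [Bf_symm n (v a)]
        have h'' := hwq a
        rw [Bf_smul_left, Bf_smul_right] at h''
        linear_combination h'' + db*hwan + da*hwan + (da*db)*hqn
      rw [Bf_smul_left, Bf_smul_right] at h'
      have hval : Bf (u a2) (u b2) =
          (Bf (v a) (u 0) * Bf (v a) (u a2)) * (Bf (v a) (u 0) * Bf (v a) (u b2)) := by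
        linear_combination ((Bf (v a) (u 0) * Bf (v a) (u a2)) * (Bf (v a) (u 0) * Bf (v a) (u b2)))*h'
          - ((Bf (v a) (u 0) * Bf (v a) (u b2)) * (Bf (v a) (u 0) * Bf (v a) (u b2)) * Bf (u a2) (u b2))*(hpmn a a2).sq
          - (Bf (u a2) (u b2))*(hpmn a b2).sq
      rw [hval]
      exact (hpmn a a2).mul (hpmn a b2)
    exact ⟨n, hnne, hqn, horthu, hpair⟩
  · -- at least four distinct classes: contradiction
    exfalso
    push_neg at hfib
    have hfib2 : ∀ x : T2, (Finset.univ.filter (fun k => cls k = x)).card ≤ 2 := by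
      intro x
      have := hfib x
      omega
    have hpick : ∀ x y z : T2, ∃ k, cls k ≠ x ∧ cls k ≠ y ∧ cls k ≠ z := by
      intro x y z
      by_contra h
      push_neg at h
      have hsub : (Finset.univ : Finset (Fin 7)) ⊆
          (Finset.univ.filter (fun k => cls k = x)) ∪
          ((Finset.univ.filter (fun k => cls k = y)) ∪
           (Finset.univ.filter (fun k => cls k = z))) := by
        intro k _
        simp only [Finset.mem_union, Finset.mem_filter, Finset.mem_univ, true_and]
        by_cases h1 : cls k = x
        · exact Or.inl h1
        · by_cases h2 : cls k = y
          · exact Or.inr (Or.inl h2)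
          · exact Or.inr (Or.inr (h k h1 h2))
      have hcard := Finset.card_le_card hsub
      have hu1 := Finset.card_union_le (Finset.univ.filter (fun k => cls k = x))
        ((Finset.univ.filter (fun k => cls k = y)) ∪ (Finset.univ.filter (fun k => cls k = z)))
      have hu2 := Finset.card_union_le (Finset.univ.filter (fun k => cls k = y))
        (Finset.univ.filter (fun k => cls k = z))
      have h7 : (Finset.univ : Finset (Fin 7)).card = 7 := by simp
      have hx' := hfib2 x
      have hy' := hfib2 y
      have hz' := hfib2 z
      omega
    obtain ⟨k2, h2a, -, -⟩ := hpick (cls 0) (cls 0) (cls 0)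
    obtain ⟨k3, h3a, h3b, -⟩ := hpick (cls 0) (cls k2) (cls k2)
    obtain ⟨k4, h4a, h4b, h4c⟩ := hpick (cls 0) (cls k2) (cls k3)
    -- set up four_classes
    have hx12 : ∀ k l : Fin 7, cls k ≠ cls l →
        ¬((Bf (v k) (u 0) * Bf (v k) (u 1)) * (Bf (v l) (u 0) * Bf (v l) (u 1)) = 1 ∧
          (Bf (v k) (u 0) * Bf (v k) (u 2)) * (Bf (v l) (u 0) * Bf (v l) (u 2)) = 1 ∧
          (Bf (v k) (u 0) * Bf (v k) (u 3)) * (Bf (v l) (u 0) * Bf (v l) (u 3)) = 1) := by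
      intro k l hne h
      obtain ⟨e1, e2, e3⟩ := h
      apply hne
      apply hclseq' k l
      intro i2
      fin_cases i2
      exacts [(htt0 k).trans (htt0 l).symm,
        (hpmn k 1).eq_of_mul_eq_one (hpmn l 1) e1,
        (hpmn k 2).eq_of_mul_eq_one (hpmn l 2) e2,
        (hpmn k 3).eq_of_mul_eq_one (hpmn l 3) e3]
    have hdd : ∀ k l : Fin 7, cls k ≠ cls l →
        ¬((Bf (v k) (u 0) * Bf (v k) (u 1)) * (Bf (v 0) (u 0) * Bf (v 0) (u 1)) =
            (Bf (v l) (u 0) * Bf (v l) (u 1)) * (Bf (v 0) (u 0) * Bf (v 0) (u 1)) ∧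
          (Bf (v k) (u 0) * Bf (v k) (u 2)) * (Bf (v 0) (u 0) * Bf (v 0) (u 2)) =
            (Bf (v l) (u 0) * Bf (v l) (u 2)) * (Bf (v 0) (u 0) * Bf (v 0) (u 2)) ∧
          (Bf (v k) (u 0) * Bf (v k) (u 3)) * (Bf (v 0) (u 0) * Bf (v 0) (u 3)) =
            (Bf (v l) (u 0) * Bf (v l) (u 3)) * (Bf (v 0) (u 0) * Bf (v 0) (u 3))) := by
      intro k l hne h
      obtain ⟨e1, e2, e3⟩ := h
      apply hne
      apply hclseq' k l
      intro i2
      fin_cases i2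
      exacts [(htt0 k).trans (htt0 l).symm,
        mul_right_cancel₀ (hpmn 0 1).ne_zero e1,
        mul_right_cancel₀ (hpmn 0 2).ne_zero e2,
        mul_right_cancel₀ (hpmn 0 3).ne_zero e3]
    have horel : ∀ m : Fin 7,
        lam 0 * (Bf (v 0) (u 0) * Bf (v 0) (u 0))
        + lam 1 * (Bf (v 0) (u 0) * Bf (v 0) (u 1)) *
            ((Bf (v m) (u 0) * Bf (v m) (u 1)) * (Bf (v 0) (u 0) * Bf (v 0) (u 1)))
        + lam 2 * (Bf (v 0) (u 0) * Bf (v 0) (u 2)) *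
            ((Bf (v m) (u 0) * Bf (v m) (u 2)) * (Bf (v 0) (u 0) * Bf (v 0) (u 2)))
        + lam 3 * (Bf (v 0) (u 0) * Bf (v 0) (u 3)) *
            ((Bf (v m) (u 0) * Bf (v m) (u 3)) * (Bf (v 0) (u 0) * Bf (v 0) (u 3))) = 0 := by
      intro m
      linear_combination (Bf (v m) (u 0)) * hort m + lam 0 * htt0 0 - lam 0 * htt0 m
        + (lam 1 * (Bf (v m) (u 0) * Bf (v m) (u 1))) * (hpmn 0 1).sq
        + (lam 2 * (Bf (v m) (u 0) * Bf (v m) (u 2))) * (hpmn 0 2).sq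
        + (lam 3 * (Bf (v m) (u 0) * Bf (v m) (u 3))) * (hpmn 0 3).sq
    exact four_classes (fun i2 => lam i2 * (Bf (v 0) (u 0) * Bf (v 0) (u i2)))
      (fun i2 => mul_ne_zero (hlamne i2) (hpmn 0 i2).ne_zero)
      (by linear_combination (Bf (v 0) (u 0)) * hort 0)
      ((Bf (v k2) (u 0) * Bf (v k2) (u 1)) * (Bf (v 0) (u 0) * Bf (v 0) (u 1)))
      ((Bf (v k2) (u 0) * Bf (v k2) (u 2)) * (Bf (v 0) (u 0) * Bf (v 0) (u 2)))
      ((Bf (v k2) (u 0) * Bf (v k2) (u 3)) * (Bf (v 0) (u 0) * Bf (v 0) (u 3)))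
      ((Bf (v k3) (u 0) * Bf (v k3) (u 1)) * (Bf (v 0) (u 0) * Bf (v 0) (u 1)))
      ((Bf (v k3) (u 0) * Bf (v k3) (u 2)) * (Bf (v 0) (u 0) * Bf (v 0) (u 2)))
      ((Bf (v k3) (u 0) * Bf (v k3) (u 3)) * (Bf (v 0) (u 0) * Bf (v 0) (u 3)))
      ((Bf (v k4) (u 0) * Bf (v k4) (u 1)) * (Bf (v 0) (u 0) * Bf (v 0) (u 1)))
      ((Bf (v k4) (u 0) * Bf (v k4) (u 2)) * (Bf (v 0) (u 0) * Bf (v 0) (u 2)))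
      ((Bf (v k4) (u 0) * Bf (v k4) (u 3)) * (Bf (v 0) (u 0) * Bf (v 0) (u 3)))
      ((hpmn k2 1).mul (hpmn 0 1)) ((hpmn k2 2).mul (hpmn 0 2)) ((hpmn k2 3).mul (hpmn 0 3))
      ((hpmn k3 1).mul (hpmn 0 1)) ((hpmn k3 2).mul (hpmn 0 2)) ((hpmn k3 3).mul (hpmn 0 3))
      ((hpmn k4 1).mul (hpmn 0 1)) ((hpmn k4 2).mul (hpmn 0 2)) ((hpmn k4 3).mul (hpmn 0 3))
      (hx12 k2 0 h2a) (hx12 k3 0 h3a) (hx12 k4 0 h4a)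
      (hdd k2 k3 (fun h => h3b h.symm)) (hdd k2 k4 (fun h => h4b h.symm))
      (hdd k3 k4 (fun h => h4c h.symm))
      (horel k2) (horel k3) (horel k4)

/-- Core case: independent lifts — impossible with 7 solutions. -/
lemma core_II (u : Fin 4 → V4) (v : Fin 7 → V4)
    (hqu : ∀ i, Bf (u i) (u i) = 1)
    (hqv : ∀ k, Bf (v k) (v k) = 1)
    (hpm : ∀ k i, IsPM (Bf (v k) (u i)))
    (hvv : ∀ k l, k ≠ l → v k ≠ v l ∧ v k ≠ -v l)
    (hLI : LinearIndependent ℝ u) : False := by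
  classical
  have hcard : Fintype.card (Fin 4) = Module.finrank ℝ V4 := by rw [finrank_V4]; simp
  have hperpu : ∀ x : V4, (∀ i, Bf x (u i) = 0) → x = 0 := fun x hx =>
    perp_all_eq_zero hLI hx
  -- Gram matrix
  obtain ⟨G, hGapp⟩ : ∃ G : Matrix (Fin 4) (Fin 4) ℝ, ∀ i j, G i j = Bf (u i) (u j) :=
    ⟨Matrix.of (fun i j => Bf (u i) (u j)), fun i j => rfl⟩
  have hGdet : G.det ≠ 0 := by
    intro hdet
    obtain ⟨x, hx0, hxv⟩ := Matrix.exists_vecMul_eq_zero_iff.2 hdet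
    have hy : ∀ j2, Bf (∑ i2, x i2 • u i2) (u j2) = 0 := by
      intro j2
      rw [Bf_sum_left]
      have := congrFun hxv j2
      simpa [Matrix.vecMul, dotProduct, hGapp] using this
    have hy0 : ∑ i2, x i2 • u i2 = 0 := by
      apply hperpu
      exact hy
    have := Fintype.linearIndependent_iff.1 hLI x hy0
    exact hx0 (funext this)
  have hGunit : IsUnit G.det := isUnit_iff_ne_zero.2 hGdet
  have hGinv : G⁻¹ * G = 1 := Matrix.nonsing_inv_mul G hGunit
  -- dual vectors
  obtain ⟨w, hwdef⟩ : ∃ w : Fin 4 → V4, ∀ i, w i = ∑ j, G⁻¹ i j • u j :=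
    ⟨fun i => ∑ j, G⁻¹ i j • u j, fun i => rfl⟩
  have hwu : ∀ i k2, Bf (w i) (u k2) = if i = k2 then 1 else 0 := by
    intro i k2
    rw [hwdef i]
    rw [Bf_sum_left]
    have : ∑ j, G⁻¹ i j * Bf (u j) (u k2) = (G⁻¹ * G) i k2 := by
      rw [Matrix.mul_apply]
      refine Finset.sum_congr rfl fun j _ => ?_
      rw [hGapp]
    rw [this, hGinv, Matrix.one_apply]
  -- decomposition of arbitrary vectors
  have hdecomp : ∀ x : V4, x = ∑ i, (Bf x (u i)) • w i := by
    intro x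
    have hz : ∀ k2, Bf (x - ∑ i, (Bf x (u i)) • w i) (u k2) = 0 := by
      intro k2
      rw [Bf_sub_left, Bf_sum_left]
      have : ∑ i, Bf x (u i) * Bf (w i) (u k2) = Bf x (u k2) := by
        rw [Finset.sum_eq_single k2]
        · rw [hwu]; simp
        · intro b _ hb
          rw [hwu]
          simp [hb]
        · intro h
          exact absurd (Finset.mem_univ k2) h
      rw [this]
      ring
    have h0 := hperpu _ hz
    exact (sub_eq_zero.1 h0)
  -- u in terms of w
  have huw : ∀ i, u i = ∑ j, G i j • w j := by
    intro i
    have h := hdecomp (u i)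
    calc u i = ∑ j, (Bf (u i) (u j)) • w j := h
    _ = ∑ j, G i j • w j := by
        refine Finset.sum_congr rfl fun j _ => ?_
        rw [hGapp]
  obtain ⟨t, htBf⟩ : ∃ t : Fin 4 → Fin 4 → ℝ, ∀ a b, t a b = Bf (w a) (w b) :=
    ⟨fun a b => Bf (w a) (w b), fun a b => rfl⟩
  -- normalized solutions and classes
  have htt0 : ∀ k : Fin 7, Bf (v k) (u 0) * Bf (v k) (u 0) = 1 := fun k => (hpm k 0).sq
  have hpmn : ∀ (k : Fin 7) (i : Fin 4), IsPM (Bf (v k) (u 0) * Bf (v k) (u i)) :=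
    fun k i => (hpm k 0).mul (hpm k i)
  -- q-value of normalized solutions as Fq
  have hqF : ∀ k : Fin 7, Fq t (Bf (v k) (u 0) * Bf (v k) (u 1))
      (Bf (v k) (u 0) * Bf (v k) (u 2)) (Bf (v k) (u 0) * Bf (v k) (u 3)) = 1 := by
    intro k
    have hv1 : Bf ((Bf (v k) (u 0)) • v k) ((Bf (v k) (u 0)) • v k) = 1 := by
      rw [Bf_smul_left, Bf_smul_right, hqv k]
      linear_combination htt0 k
    have hd : (Bf (v k) (u 0)) • v k =
        ∑ i, (![1, Bf (v k) (u 0) * Bf (v k) (u 1), Bf (v k) (u 0) * Bf (v k) (u 2),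
          Bf (v k) (u 0) * Bf (v k) (u 3)] i) • w i := by
      have h := hdecomp ((Bf (v k) (u 0)) • v k)
      rw [h]
      refine Finset.sum_congr rfl fun i _ => ?_
      congr 1
      rw [Bf_smul_left]
      fin_cases i
      exacts [htt0 k, rfl, rfl, rfl]
    rw [hd] at hv1
    rw [Bf_sum_sum] at hv1
    rw [Fq_def]
    refine Eq.trans ?_ hv1
    refine Finset.sum_congr rfl fun i _ => Finset.sum_congr rfl fun j _ => ?_
    rw [htBf]
  -- encode classes
  set cls : Fin 7 → T2 := fun k =>
    (Classical.choose (dec_eq_of_isPM (hpmn k 1)),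
     Classical.choose (dec_eq_of_isPM (hpmn k 2)),
     Classical.choose (dec_eq_of_isPM (hpmn k 3))) with hcls
  have hcls1 : ∀ k, dec (cls k).1 = Bf (v k) (u 0) * Bf (v k) (u 1) := fun k =>
    Classical.choose_spec (dec_eq_of_isPM (hpmn k 1))
  have hcls2 : ∀ k, dec (cls k).2.1 = Bf (v k) (u 0) * Bf (v k) (u 2) := fun k =>
    Classical.choose_spec (dec_eq_of_isPM (hpmn k 2))
  have hcls3 : ∀ k, dec (cls k).2.2 = Bf (v k) (u 0) * Bf (v k) (u 3) := fun k =>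
    Classical.choose_spec (dec_eq_of_isPM (hpmn k 3))
  have hclsinj : Function.Injective cls := by
    intro k l h
    by_contra hkl
    have heq : ∀ i : Fin 4, Bf (v k) (u 0) * Bf (v k) (u i) = Bf (v l) (u 0) * Bf (v l) (u i) := by
      intro i
      have q0 := (htt0 k).trans (htt0 l).symm
      have q1 : Bf (v k) (u 0) * Bf (v k) (u 1) = Bf (v l) (u 0) * Bf (v l) (u 1) := by
        rw [← hcls1 k, ← hcls1 l, h]
      have q2 : Bf (v k) (u 0) * Bf (v k) (u 2) = Bf (v l) (u 0) * Bf (v l) (u 2) := by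
        rw [← hcls2 k, ← hcls2 l, h]
      have q3 : Bf (v k) (u 0) * Bf (v k) (u 3) = Bf (v l) (u 0) * Bf (v l) (u 3) := by
        rw [← hcls3 k, ← hcls3 l, h]
      fin_cases i
      exacts [q0, q1, q2, q3]
    have hwk : (Bf (v k) (u 0)) • v k = (Bf (v l) (u 0)) • v l := by
      have h1 := hdecomp ((Bf (v k) (u 0)) • v k)
      have h2 := hdecomp ((Bf (v l) (u 0)) • v l)
      rw [h1, h2]
      refine Finset.sum_congr rfl fun i _ => ?_
      congr 1
      rw [Bf_smul_left, Bf_smul_left]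
      exact heq i
    have hva : v k = (Bf (v k) (u 0) * Bf (v l) (u 0)) • v l := by
      calc v k = (Bf (v k) (u 0) * Bf (v k) (u 0)) • v k := by rw [htt0 k, one_smul]
      _ = (Bf (v k) (u 0)) • ((Bf (v k) (u 0)) • v k) := by rw [smul_smul]
      _ = (Bf (v k) (u 0)) • ((Bf (v l) (u 0)) • v l) := by rw [hwk]
      _ = (Bf (v k) (u 0) * Bf (v l) (u 0)) • v l := by rw [smul_smul]
    rcases (hpm k 0).mul (hpm l 0) with h'|h'
    · rw [h', one_smul] at hva
      exact (hvv k l hkl).1 hva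
    · rw [h', neg_one_smul] at hva
      exact (hvv k l hkl).2 hva
  -- the image misses exactly one class
  have hT2card : Fintype.card T2 = 8 := by simp [T2]
  obtain ⟨m, hm⟩ : ∃ m : T2, Finset.univ \ Finset.univ.image cls = {m} := by
    apply Finset.card_eq_one.1
    rw [Finset.card_sdiff_of_subset (Finset.subset_univ _)]
    rw [Finset.card_image_of_injective _ hclsinj]
    simp [hT2card]
  have hcov : ∀ s : T2, s ≠ m → ∃ k, cls k = s := by
    intro s hs
    by_contra h
    push_neg at h
    have hsin : s ∈ Finset.univ \ Finset.univ.image cls := by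
      refine Finset.mem_sdiff.2 ⟨Finset.mem_univ s, ?_⟩
      intro hmem
      obtain ⟨k, -, hk⟩ := Finset.mem_image.1 hmem
      exact h k hk
    rw [hm] at hsin
    exact hs (Finset.mem_singleton.1 hsin)
  -- all 8 classes satisfy Fq = 1, hence t is diagonal
  have hFs : ∀ s : T2, s ≠ m → Fq t (dec s.1) (dec s.2.1) (dec s.2.2) = 1 := by
    intro s hs
    obtain ⟨k, hk⟩ := hcov s hs
    rw [← hk, hcls1, hcls2, hcls3]
    exact hqF k
  obtain ⟨t01, t02, t03, t12, t13, t23⟩ := seven_of_eight t m hFs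
  have htsym : ∀ a b, t a b = t b a := by
    intro a b
    rw [htBf, htBf]
    exact Bf_symm _ _
  have htoff : ∀ a b : Fin 4, a ≠ b → t a b = 0 := by
    have z01 : t 0 1 = 0 := by linarith [htsym 0 1]
    have z10 : t 1 0 = 0 := by linarith [htsym 0 1]
    have z02 : t 0 2 = 0 := by linarith [htsym 0 2]
    have z20 : t 2 0 = 0 := by linarith [htsym 0 2]
    have z03 : t 0 3 = 0 := by linarith [htsym 0 3]
    have z30 : t 3 0 = 0 := by linarith [htsym 0 3]
    have z12 : t 1 2 = 0 := by linarith [htsym 1 2]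
    have z21 : t 2 1 = 0 := by linarith [htsym 1 2]
    have z13 : t 1 3 = 0 := by linarith [htsym 1 3]
    have z31 : t 3 1 = 0 := by linarith [htsym 1 3]
    have z23 : t 2 3 = 0 := by linarith [htsym 2 3]
    have z32 : t 3 2 = 0 := by linarith [htsym 2 3]
    intro a b hab
    fin_cases a <;> fin_cases b <;>
      first
      | exact absurd rfl hab
      | exact z01 | exact z10 | exact z02 | exact z20 | exact z03 | exact z30
      | exact z12 | exact z21 | exact z13 | exact z31 | exact z23 | exact z32
  have htif : ∀ a b : Fin 4, t a b = (if a = b then t a a else 0) := by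
    intro a b
    by_cases h : a = b
    · rw [h]; simp
    · rw [htoff a b h]; simp [h]
  -- diagonal entries are 1
  have htdiag : ∀ i, t i i = 1 := by
    intro i
    have h1 : Bf (w i) (u i) = 1 := by rw [hwu]; simp
    have e := congrArg (fun x => Bf (w i) x) (huw i)
    rw [Bf_sum_right] at e
    simp only [← htBf] at e
    rw [Finset.sum_eq_single i] at e
    · rw [h1] at e
      have hGii : G i i = 1 := by rw [hGapp]; exact hqu i
      rw [hGii, one_mul] at e
      exact e.symm
    · intro b _ hb
      rw [htoff i b (Ne.symm hb)]
      ring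
    · intro h
      exact absurd (Finset.mem_univ i) h
  -- the Gram matrix is idempotent, hence the identity
  have hGG : ∀ a b, Bf (u a) (u b) = ∑ j, G a j * G b j := by
    intro a b
    have e1 : Bf (u a) (u b) = ∑ i, ∑ j, G a i * G b j * Bf (w i) (w j) := by
      conv_lhs => rw [huw a, huw b]
      rw [Bf_sum_sum]
    rw [e1]
    refine Finset.sum_congr rfl fun i _ => ?_
    simp only [← htBf]
    rw [Finset.sum_eq_single i]
    · rw [htdiag i]
      ring
    · intro b2 _ hb2
      rw [htoff i b2 (Ne.symm hb2)]
      ring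
    · intro h
      exact absurd (Finset.mem_univ i) h
  have hGmul : G = G * G := by
    ext a b
    rw [Matrix.mul_apply, hGapp, hGG a b]
    refine Finset.sum_congr rfl fun j _ => ?_
    have : G j b = G b j := by rw [hGapp, hGapp]; exact Bf_symm _ _
    rw [this]
  have h1G : (1 : Matrix (Fin 4) (Fin 4) ℝ) = G := by
    calc (1 : Matrix (Fin 4) (Fin 4) ℝ) = G⁻¹ * G := hGinv.symm
    _ = G⁻¹ * (G * G) := by rw [← hGmul]
    _ = (G⁻¹ * G) * G := by rw [Matrix.mul_assoc]
    _ = 1 * G := by rw [hGinv]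
    _ = G := one_mul G
  have horm : ∀ a b, Bf (u a) (u b) = if a = b then 1 else 0 := by
    intro a b
    rw [← hGapp, ← h1G]
    exact Matrix.one_apply
  -- contradiction with the signature: the null vector (0,0,1,1)
  set y : V4 := ![0, 0, 1, 1] with hy
  have hyq : Bf y y = 0 := by
    rw [hy]
    show (0:ℝ) * 0 + 0 * 0 + 1 * 1 - 1 * 1 = 0
    norm_num
  let b := basisOfLinearIndependentOfCardEqFinrank hLI hcard
  have hb : ⇑b = u := coe_basisOfLinearIndependentOfCardEqFinrank hLI hcard
  have hyr : ∑ i, b.repr y i • u i = y := by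
    have h := Module.Basis.sum_repr b y
    rwa [hb] at h
  have hsum0 : ∑ i, (b.repr y i) * (b.repr y i) = 0 := by
    have e1 : Bf y y = ∑ i, ∑ j, (b.repr y i) * (b.repr y j) * Bf (u i) (u j) := by
      conv_lhs => rw [← hyr]
      rw [Bf_sum_sum]
    rw [hyq] at e1
    have e2 : ∑ i, ∑ j, (b.repr y i) * (b.repr y j) * Bf (u i) (u j)
        = ∑ i, (b.repr y i) * (b.repr y i) := by
      refine Finset.sum_congr rfl fun i _ => ?_
      rw [Finset.sum_eq_single i]
      · rw [horm]; simp
      · intro b2 _ hb2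
        rw [horm]
        simp [Ne.symm hb2]
      · intro h
        exact absurd (Finset.mem_univ i) h
    rw [e2] at e1
    exact e1.symm
  have hri : ∀ i, b.repr y i = 0 := by
    intro i
    have := (Finset.sum_eq_zero_iff_of_nonneg (fun i _ => mul_self_nonneg (b.repr y i))).1
      hsum0 i (Finset.mem_univ i)
    exact mul_self_eq_zero.1 this
  have hy0 : y = 0 := by
    rw [← hyr]
    refine Finset.sum_eq_zero fun i _ => ?_
    rw [hri i, zero_smul]
  have := congrFun hy0 2
  rw [hy] at this
  have h2 : (1 : ℝ) = 0 := this
  norm_num at h2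

/-- The master lemma: 7 normalized solutions force a common tangency point structure. -/
lemma main_lemma (u : Fin 4 → V4) (v : Fin 7 → V4)
    (hqu : ∀ i, Bf (u i) (u i) = 1)
    (hqv : ∀ k, Bf (v k) (v k) = 1)
    (hpm : ∀ k i, IsPM (Bf (v k) (u i)))
    (huu : ∀ a b, a ≠ b → u a ≠ u b ∧ u a ≠ -u b)
    (hvv : ∀ k l, k ≠ l → v k ≠ v l ∧ v k ≠ -v l) :
    ∃ n : V4, n ≠ 0 ∧ Bf n n = 0 ∧ (∀ m, Bf (u m) n = 0) ∧
      (∀ a b, a ≠ b → IsPM (Bf (u a) (u b))) := by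
  have hune : ∀ i, u i ≠ 0 := fun i => q_ne_zero (hqu i)
  by_cases hLI : LinearIndependent ℝ u
  · exact (core_II u v hqu hqv hpm hvv hLI).elim
  obtain ⟨μ0, hμrel0, i0, hi0⟩ := Fintype.not_linearIndependent_iff.1 hLI
  by_cases h3 : ∃ μ : Fin 4 → ℝ, (∑ i, μ i • u i = 0) ∧ (∃ i, μ i ≠ 0) ∧ (∃ i, μ i = 0)
  · obtain ⟨μ, hrel, ⟨inz, hinz⟩, ⟨l, hl⟩⟩ := h3
    fin_cases l
    · -- l = 0
      have hl' : μ 0 = 0 := hl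
      rw [Fin.sum_univ_four, hl', zero_smul] at hrel
      simp only [add_zero, zero_add] at hrel
      rcases eq_or_ne (μ 1) 0 with hA|hA <;> rcases eq_or_ne (μ 2) 0 with hB|hB <;>
        rcases eq_or_ne (μ 3) 0 with hC|hC
      · exfalso
        apply hinz
        fin_cases inz
        exacts [hl', hA, hB, hC]
      · -- only μ 3 ≠ 0
        exfalso
        rw [hA, hB, zero_smul, zero_smul] at hrel
        simp only [add_zero, zero_add] at hrel
        rcases smul_eq_zero.1 hrel with h'|h'
        · exact hC h'
        · exact hune _ h'
      · exfalso
        rw [hA, hC, zero_smul, zero_smul] at hrel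
        simp only [add_zero, zero_add] at hrel
        rcases smul_eq_zero.1 hrel with h'|h'
        · exact hB h'
        · exact hune _ h'
      · -- μ 2, μ 3 ≠ 0
        exfalso
        rw [hA, zero_smul] at hrel
        simp only [add_zero, zero_add] at hrel
        rcases two_term_relation (hqu 2) (hqu 3) hB hrel with h'|h'
        · exact (huu 2 3 (by decide)).1 h'
        · exact (huu 2 3 (by decide)).2 h'
      · exfalso
        rw [hB, hC, zero_smul, zero_smul] at hrel
        simp only [add_zero, zero_add] at hrel
        rcases smul_eq_zero.1 hrel with h'|h'
        · exact hA h'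
        · exact hune _ h'
      · exfalso
        rw [hB, zero_smul] at hrel
        simp only [add_zero, zero_add] at hrel
        rcases two_term_relation (hqu 1) (hqu 3) hA hrel with h'|h'
        · exact (huu 1 3 (by decide)).1 h'
        · exact (huu 1 3 (by decide)).2 h'
      · exfalso
        rw [hC, zero_smul] at hrel
        simp only [add_zero, zero_add] at hrel
        rcases two_term_relation (hqu 1) (hqu 2) hA hrel with h'|h'
        · exact (huu 1 2 (by decide)).1 h'
        · exact (huu 1 2 (by decide)).2 h'
      · -- all three nonzero: 3-term relation
        have hu3 : u 3 = (-(μ 1)/μ 3) • u 1 + (-(μ 2)/μ 3) • u 2 := by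
          apply smul_right_injective V4 hC
          show μ 3 • u 3 = μ 3 • ((-(μ 1)/μ 3) • u 1 + (-(μ 2)/μ 3) • u 2)
          rw [smul_add, smul_smul, smul_smul]
          have c1 : μ 3 * (-(μ 1)/μ 3) = -(μ 1) := by field_simp
          have c2 : μ 3 * (-(μ 2)/μ 3) = -(μ 2) := by field_simp
          rw [c1, c2, neg_smul, neg_smul]
          apply eq_of_sub_eq_zero
          rw [← hrel]
          abel
        exact core_Ia u v hqu hqv hpm huu hvv 1 2 3 0 (by decide) (by decide)
          _ _ (div_ne_zero (neg_ne_zero.2 hA) hC) (div_ne_zero (neg_ne_zero.2 hB) hC) hu3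
    · -- l = 1
      have hl' : μ 1 = 0 := hl
      rw [Fin.sum_univ_four, hl', zero_smul] at hrel
      simp only [add_zero, zero_add] at hrel
      rcases eq_or_ne (μ 0) 0 with hA|hA <;> rcases eq_or_ne (μ 2) 0 with hB|hB <;>
        rcases eq_or_ne (μ 3) 0 with hC|hC
      · exfalso
        apply hinz
        fin_cases inz
        exacts [hA, hl', hB, hC]
      · -- only μ 3 ≠ 0
        exfalso
        rw [hA, hB, zero_smul, zero_smul] at hrel
        simp only [add_zero, zero_add] at hrel
        rcases smul_eq_zero.1 hrel with h'|h'
        · exact hC h'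
        · exact hune _ h'
      · exfalso
        rw [hA, hC, zero_smul, zero_smul] at hrel
        simp only [add_zero, zero_add] at hrel
        rcases smul_eq_zero.1 hrel with h'|h'
        · exact hB h'
        · exact hune _ h'
      · -- μ 2, μ 3 ≠ 0
        exfalso
        rw [hA, zero_smul] at hrel
        simp only [add_zero, zero_add] at hrel
        rcases two_term_relation (hqu 2) (hqu 3) hB hrel with h'|h'
        · exact (huu 2 3 (by decide)).1 h'
        · exact (huu 2 3 (by decide)).2 h'
      · exfalso
        rw [hB, hC, zero_smul, zero_smul] at hrel
        simp only [add_zero, zero_add] at hrel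
        rcases smul_eq_zero.1 hrel with h'|h'
        · exact hA h'
        · exact hune _ h'
      · exfalso
        rw [hB, zero_smul] at hrel
        simp only [add_zero, zero_add] at hrel
        rcases two_term_relation (hqu 0) (hqu 3) hA hrel with h'|h'
        · exact (huu 0 3 (by decide)).1 h'
        · exact (huu 0 3 (by decide)).2 h'
      · exfalso
        rw [hC, zero_smul] at hrel
        simp only [add_zero, zero_add] at hrel
        rcases two_term_relation (hqu 0) (hqu 2) hA hrel with h'|h'
        · exact (huu 0 2 (by decide)).1 h'
        · exact (huu 0 2 (by decide)).2 h'
      · -- all three nonzero: 3-term relation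
        have hu3 : u 3 = (-(μ 0)/μ 3) • u 0 + (-(μ 2)/μ 3) • u 2 := by
          apply smul_right_injective V4 hC
          show μ 3 • u 3 = μ 3 • ((-(μ 0)/μ 3) • u 0 + (-(μ 2)/μ 3) • u 2)
          rw [smul_add, smul_smul, smul_smul]
          have c1 : μ 3 * (-(μ 0)/μ 3) = -(μ 0) := by field_simp
          have c2 : μ 3 * (-(μ 2)/μ 3) = -(μ 2) := by field_simp
          rw [c1, c2, neg_smul, neg_smul]
          apply eq_of_sub_eq_zero
          rw [← hrel]
          abel
        exact core_Ia u v hqu hqv hpm huu hvv 0 2 3 1 (by decide) (by decide)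
          _ _ (div_ne_zero (neg_ne_zero.2 hA) hC) (div_ne_zero (neg_ne_zero.2 hB) hC) hu3
    · -- l = 2
      have hl' : μ 2 = 0 := hl
      rw [Fin.sum_univ_four, hl', zero_smul] at hrel
      simp only [add_zero, zero_add] at hrel
      rcases eq_or_ne (μ 0) 0 with hA|hA <;> rcases eq_or_ne (μ 1) 0 with hB|hB <;>
        rcases eq_or_ne (μ 3) 0 with hC|hC
      · exfalso
        apply hinz
        fin_cases inz
        exacts [hA, hB, hl', hC]
      · -- only μ 3 ≠ 0
        exfalso
        rw [hA, hB, zero_smul, zero_smul] at hrel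
        simp only [add_zero, zero_add] at hrel
        rcases smul_eq_zero.1 hrel with h'|h'
        · exact hC h'
        · exact hune _ h'
      · exfalso
        rw [hA, hC, zero_smul, zero_smul] at hrel
        simp only [add_zero, zero_add] at hrel
        rcases smul_eq_zero.1 hrel with h'|h'
        · exact hB h'
        · exact hune _ h'
      · -- μ 1, μ 3 ≠ 0
        exfalso
        rw [hA, zero_smul] at hrel
        simp only [add_zero, zero_add] at hrel
        rcases two_term_relation (hqu 1) (hqu 3) hB hrel with h'|h'
        · exact (huu 1 3 (by decide)).1 h'
        · exact (huu 1 3 (by decide)).2 h'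
      · exfalso
        rw [hB, hC, zero_smul, zero_smul] at hrel
        simp only [add_zero, zero_add] at hrel
        rcases smul_eq_zero.1 hrel with h'|h'
        · exact hA h'
        · exact hune _ h'
      · exfalso
        rw [hB, zero_smul] at hrel
        simp only [add_zero, zero_add] at hrel
        rcases two_term_relation (hqu 0) (hqu 3) hA hrel with h'|h'
        · exact (huu 0 3 (by decide)).1 h'
        · exact (huu 0 3 (by decide)).2 h'
      · exfalso
        rw [hC, zero_smul] at hrel
        simp only [add_zero, zero_add] at hrel
        rcases two_term_relation (hqu 0) (hqu 1) hA hrel with h'|h'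
        · exact (huu 0 1 (by decide)).1 h'
        · exact (huu 0 1 (by decide)).2 h'
      · -- all three nonzero: 3-term relation
        have hu3 : u 3 = (-(μ 0)/μ 3) • u 0 + (-(μ 1)/μ 3) • u 1 := by
          apply smul_right_injective V4 hC
          show μ 3 • u 3 = μ 3 • ((-(μ 0)/μ 3) • u 0 + (-(μ 1)/μ 3) • u 1)
          rw [smul_add, smul_smul, smul_smul]
          have c1 : μ 3 * (-(μ 0)/μ 3) = -(μ 0) := by field_simp
          have c2 : μ 3 * (-(μ 1)/μ 3) = -(μ 1) := by field_simp
          rw [c1, c2, neg_smul, neg_smul]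
          apply eq_of_sub_eq_zero
          rw [← hrel]
          abel
        exact core_Ia u v hqu hqv hpm huu hvv 0 1 3 2 (by decide) (by decide)
          _ _ (div_ne_zero (neg_ne_zero.2 hA) hC) (div_ne_zero (neg_ne_zero.2 hB) hC) hu3
    · -- l = 3
      have hl' : μ 3 = 0 := hl
      rw [Fin.sum_univ_four, hl', zero_smul] at hrel
      simp only [add_zero, zero_add] at hrel
      rcases eq_or_ne (μ 0) 0 with hA|hA <;> rcases eq_or_ne (μ 1) 0 with hB|hB <;>
        rcases eq_or_ne (μ 2) 0 with hC|hC
      · exfalso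
        apply hinz
        fin_cases inz
        exacts [hA, hB, hC, hl']
      · -- only μ 2 ≠ 0
        exfalso
        rw [hA, hB, zero_smul, zero_smul] at hrel
        simp only [add_zero, zero_add] at hrel
        rcases smul_eq_zero.1 hrel with h'|h'
        · exact hC h'
        · exact hune _ h'
      · exfalso
        rw [hA, hC, zero_smul, zero_smul] at hrel
        simp only [add_zero, zero_add] at hrel
        rcases smul_eq_zero.1 hrel with h'|h'
        · exact hB h'
        · exact hune _ h'
      · -- μ 1, μ 2 ≠ 0
        exfalso
        rw [hA, zero_smul] at hrel
        simp only [add_zero, zero_add] at hrel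
        rcases two_term_relation (hqu 1) (hqu 2) hB hrel with h'|h'
        · exact (huu 1 2 (by decide)).1 h'
        · exact (huu 1 2 (by decide)).2 h'
      · exfalso
        rw [hB, hC, zero_smul, zero_smul] at hrel
        simp only [add_zero, zero_add] at hrel
        rcases smul_eq_zero.1 hrel with h'|h'
        · exact hA h'
        · exact hune _ h'
      · exfalso
        rw [hB, zero_smul] at hrel
        simp only [add_zero, zero_add] at hrel
        rcases two_term_relation (hqu 0) (hqu 2) hA hrel with h'|h'
        · exact (huu 0 2 (by decide)).1 h'
        · exact (huu 0 2 (by decide)).2 h'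
      · exfalso
        rw [hC, zero_smul] at hrel
        simp only [add_zero, zero_add] at hrel
        rcases two_term_relation (hqu 0) (hqu 1) hA hrel with h'|h'
        · exact (huu 0 1 (by decide)).1 h'
        · exact (huu 0 1 (by decide)).2 h'
      · -- all three nonzero: 3-term relation
        have hu3 : u 2 = (-(μ 0)/μ 2) • u 0 + (-(μ 1)/μ 2) • u 1 := by
          apply smul_right_injective V4 hC
          show μ 2 • u 2 = μ 2 • ((-(μ 0)/μ 2) • u 0 + (-(μ 1)/μ 2) • u 1)
          rw [smul_add, smul_smul, smul_smul]
          have c1 : μ 2 * (-(μ 0)/μ 2) = -(μ 0) := by field_simp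
          have c2 : μ 2 * (-(μ 1)/μ 2) = -(μ 1) := by field_simp
          rw [c1, c2, neg_smul, neg_smul]
          apply eq_of_sub_eq_zero
          rw [← hrel]
          abel
        exact core_Ia u v hqu hqv hpm huu hvv 0 1 2 3 (by decide) (by decide)
          _ _ (div_ne_zero (neg_ne_zero.2 hA) hC) (div_ne_zero (neg_ne_zero.2 hB) hC) hu3
  · -- no relation with zero coefficient: full support relation and u0,u1,u2 independent
    have hall : ∀ i, μ0 i ≠ 0 := by
      intro i hi
      exact h3 ⟨μ0, hμrel0, ⟨i0, hi0⟩, ⟨i, hi⟩⟩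
    have hLI3 : ∀ a b c : ℝ, a • u 0 + b • u 1 + c • u 2 = 0 → a = 0 ∧ b = 0 ∧ c = 0 := by
      intro a b c h
      by_contra hcon
      apply h3
      refine ⟨![a, b, c, 0], ?_, ?_, ⟨3, rfl⟩⟩
      · rw [Fin.sum_univ_four]
        show a • u 0 + b • u 1 + c • u 2 + (0:ℝ) • u 3 = 0
        rw [zero_smul, add_zero]
        exact h
      · by_cases ha : a = 0
        · by_cases hb : b = 0
          · have hc : c ≠ 0 := fun hc => hcon ⟨ha, hb, hc⟩
            exact ⟨2, hc⟩
          · exact ⟨1, hb⟩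
        · exact ⟨0, ha⟩
    exact core_Ib u v hqu hqv hpm hvv μ0 hμrel0 hall hLI3

end ApollAux

open ApollAux

/-- Four pairwise distinct circles, not all tangent at one point, have at most 6 common
tangent circles. -/
theorem apollonius_four_circles
    (c : Fin 4 → Plane) (r : Fin 4 → ℝ) (hr : ∀ i, 0 < r i)
    (hdist : ∀ i j, i ≠ j → (c i, r i) ≠ (c j, r j))
    (hnot : ¬ ∃ p : Plane, (∀ i, dist p (c i) = r i) ∧
      ∀ i j, i ≠ j → Tangent (c i, r i) (c j, r j)) :
    {d : Plane × ℝ | 0 < d.2 ∧ ∀ i, Tangent d (c i, r i)}.encard ≤ 6 := by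
  classical
  by_contra hcon
  push_neg at hcon
  have h7 : (7 : ℕ∞) ≤ {d : Plane × ℝ | 0 < d.2 ∧ ∀ i, Tangent d (c i, r i)}.encard := by
    have h6 : ((6 : ℕ∞) + 1) ≤ _ := Order.add_one_le_of_lt hcon
    exact (show (7 : ℕ∞) = 6 + 1 by norm_num).trans_le h6
  obtain ⟨T, hTsub, hTcard⟩ := Set.exists_subset_encard_eq h7
  have hTfin : T.Finite := Set.finite_of_encard_eq_coe (k := 7) hTcard
  have hTc : hTfin.toFinset.card = 7 := by
    have h := hTfin.encard_eq_coe_toFinset_card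
    rw [hTcard] at h
    exact_mod_cast h.symm
  set e := hTfin.toFinset.equivFinOfCardEq hTc with he
  set d : Fin 7 → Plane × ℝ := fun k => (e.symm k : Plane × ℝ) with hd
  have hdmem : ∀ k, d k ∈ T := by
    intro k
    have h := (e.symm k).2
    rw [Set.Finite.mem_toFinset] at h
    exact h
  have hdinj : Function.Injective d := by
    intro k l h
    have h2 : e.symm k = e.symm l := Subtype.coe_injective h
    exact e.symm.injective h2
  have hdS : ∀ k, 0 < (d k).2 ∧ ∀ i, Tangent (d k) (c i, r i) := fun k => hTsub (hdmem k)
  have hdr : ∀ k, 0 < (d k).2 := fun k => (hdS k).1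
  have hdt : ∀ k i, Tangent (d k) (c i, r i) := fun k i => (hdS k).2 i
  set u : Fin 4 → V4 := fun i => ApollAux.lift (c i, r i) with hu
  set v : Fin 7 → V4 := fun k => ApollAux.lift (d k) with hv
  have hqu : ∀ i, Bf (u i) (u i) = 1 := fun i => q_lift _ (ne_of_gt (hr i))
  have hqv : ∀ k, Bf (v k) (v k) = 1 := fun k => q_lift _ (ne_of_gt (hdr k))
  have hpm : ∀ k i, IsPM (Bf (v k) (u i)) := fun k i =>
    tangent_isPM (hdr k) (hr i) (hdt k i)
  have huu : ∀ a b, a ≠ b → u a ≠ u b ∧ u a ≠ -u b := by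
    intro a b hab
    constructor
    · intro h
      exact hdist a b hab (lift_inj (hr a) (hr b) h)
    · intro h
      exact lift_ne_neg (hr a) (hr b) h
  have hvv : ∀ k l, k ≠ l → v k ≠ v l ∧ v k ≠ -v l := by
    intro k l hkl
    constructor
    · intro h
      exact hkl (hdinj (lift_inj (hdr k) (hdr l) h))
    · intro h
      exact lift_ne_neg (hdr k) (hdr l) h
  obtain ⟨n, hn0, hqn, horth, hpair⟩ := main_lemma u v hqu hqv hpm huu hvv
  apply hnot
  obtain ⟨p, hp⟩ := common_point hn0 hqn c r hr (fun i => horth i)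
  refine ⟨p, hp, ?_⟩
  intro i j hij
  exact isPM_tangent (hr i) (hr j) (hdist i j hij) (hpair i j hij)
end
end

section
/- There exist four pairwise distinct circles in the plane, not all tangent at one point, together with six pairwise distinct circles each of which is tangent to all four given circles. (Hence the bound 6 in the four-circle Apollonius theorem is attained.) -/
noncomputable section

/-- A point of the plane from two coordinates. -/
noncomputable def pt (a b : ℝ) : Plane := (WithLp.equiv 2 _).symm ![a, b]

lemma dist_pt (a b c d : ℝ) : dist (pt a b) (pt c d) = Real.sqrt ((a-c)^2+(b-d)^2) := by
  rw [EuclideanSpace.dist_eq, Fin.sum_univ_two]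
  simp [pt, Real.dist_eq, sq_abs]

lemma dist_pt_eq (a b c d e : ℝ) (he : 0 ≤ e) (h : (a-c)^2+(b-d)^2 = e^2) :
    dist (pt a b) (pt c d) = e := by
  rw [dist_pt, h, Real.sqrt_sq he]

lemma pt_inj (a b c d : ℝ) : pt a b = pt c d ↔ a = c ∧ b = d := by
  simp only [pt, EmbeddingLike.apply_eq_iff_eq, funext_iff, Fin.forall_fin_two]
  simp

lemma pair_ne_x {u v : ℝ} (a b c d : ℝ) (h : a ≠ c) : (pt a b, u) ≠ (pt c d, v) :=
  fun e => h ((pt_inj a b c d).1 (congrArg Prod.fst e)).1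

lemma pair_ne_y {u v : ℝ} (a b c d : ℝ) (h : b ≠ d) : (pt a b, u) ≠ (pt c d, v) :=
  fun e => h ((pt_inj a b c d).1 (congrArg Prod.fst e)).2

lemma pair_ne_r {a b c d : ℝ} (u v : ℝ) (h : u ≠ v) : (pt a b, u) ≠ (pt c d, v) :=
  fun e => h (congrArg Prod.snd e)

lemma tang (a b u c d v e : ℝ) (he : 0 < e) (h : (a-c)^2+(b-d)^2 = e^2)
    (h2 : u + v = e ∨ |u - v| = e) :
    Tangent (pt a b, u) (pt c d, v) := by
  have hd : dist (pt a b) (pt c d) = e := dist_pt_eq _ _ _ _ _ he.le h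
  refine ⟨fun hEq => ?_, ?_⟩
  · have h1 : pt a b = pt c d := congrArg Prod.fst hEq
    rw [h1, dist_self] at hd
    exact he.ne' hd.symm
  · rcases h2 with h2 | h2
    · exact Or.inl (by rw [hd, ← h2])
    · exact Or.inr (by rw [hd, ← h2])

/-- The bound 6 is attained: there are four pairwise distinct circles, not all tangent at
one point, with six pairwise distinct common tangent circles. -/
theorem apollonius_four_circles_sharp :
    ∃ (c : Fin 4 → Plane) (r : Fin 4 → ℝ) (d : Fin 6 → Plane) (ρ : Fin 6 → ℝ),
      (∀ i, 0 < r i) ∧ (∀ j, 0 < ρ j) ∧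
      (∀ i j, i ≠ j → (c i, r i) ≠ (c j, r j)) ∧
      (∀ i j, i ≠ j → (d i, ρ i) ≠ (d j, ρ j)) ∧
      (¬ ∃ p : Plane, (∀ i, dist p (c i) = r i) ∧
        ∀ i j, i ≠ j → Tangent (c i, r i) (c j, r j)) ∧
      (∀ j i, Tangent (d j, ρ j) (c i, r i)) := by
  have h7 : Real.sqrt 7 ^ 2 = 7 := Real.sq_sqrt (by norm_num)
  have hs : (0:ℝ) < Real.sqrt 7 := Real.sqrt_pos.mpr (by norm_num)
  refine ⟨![pt 0 0, pt 0 0, pt (15/4) 0, pt (-15/4) 0], ![1, 9, 9/4, 9/4],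
    ![pt 3 (Real.sqrt 7), pt 3 (-Real.sqrt 7), pt (-3) (Real.sqrt 7),
      pt (-3) (-Real.sqrt 7), pt 0 5, pt 0 (-5)],
    ![5, 5, 5, 5, 4, 4], ?_, ?_, ?_, ?_, ?_, ?_⟩
  · intro i
    fin_cases i <;>
      first
      | (show (0:ℝ) < 1; norm_num)
      | (show (0:ℝ) < 9; norm_num)
      | (show (0:ℝ) < 9/4; norm_num)
  · intro j
    fin_cases j <;>
      first
      | (show (0:ℝ) < 5; norm_num)
      | (show (0:ℝ) < 4; norm_num)
  · intro i j hij
    fin_cases i <;> fin_cases j <;>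
      first
      | exact absurd rfl hij
      | (refine pair_ne_r _ _ ?_; norm_num; done)
      | (refine pair_ne_x _ _ _ _ ?_; norm_num; done)
  · intro i j hij
    fin_cases i <;> fin_cases j <;>
      first
      | exact absurd rfl hij
      | (refine pair_ne_r _ _ ?_; norm_num; done)
      | (refine pair_ne_x _ _ _ _ ?_; norm_num; done)
      | (refine pair_ne_y _ _ _ _ ?_; norm_num; done)
      | (refine pair_ne_y _ _ _ _ ?_; intro h; linarith; done)
  · rintro ⟨p, -, htang⟩
    have h : dist (pt (0:ℝ) 0) (pt (0:ℝ) 0) = (1:ℝ) + 9 ∨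
        dist (pt (0:ℝ) 0) (pt (0:ℝ) 0) = |(1:ℝ) - 9| := (htang 0 1 (by decide)).2
    rw [dist_self] at h
    rcases h with h | h
    · norm_num at h
    · rw [show |(1:ℝ) - 9| = 8 by rw [abs_of_nonpos] <;> norm_num] at h
      norm_num at h
  · intro j i
    fin_cases j <;> fin_cases i
    -- j = 0 : center (3, √7), radius 5
    · exact tang _ _ _ _ _ _ 4 (by norm_num) (by nlinarith [h7])
        (Or.inr (by rw [abs_of_nonneg] <;> norm_num))
    · exact tang _ _ _ _ _ _ 4 (by norm_num) (by nlinarith [h7])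
        (Or.inr (by rw [abs_of_nonpos] <;> norm_num))
    · exact tang _ _ _ _ _ _ (11/4) (by norm_num) (by nlinarith [h7])
        (Or.inr (by rw [abs_of_nonneg] <;> norm_num))
    · exact tang _ _ _ _ _ _ (29/4) (by norm_num) (by nlinarith [h7])
        (Or.inl (by norm_num))
    -- j = 1 : center (3, -√7), radius 5
    · exact tang _ _ _ _ _ _ 4 (by norm_num) (by nlinarith [h7])
        (Or.inr (by rw [abs_of_nonneg] <;> norm_num))
    · exact tang _ _ _ _ _ _ 4 (by norm_num) (by nlinarith [h7])
        (Or.inr (by rw [abs_of_nonpos] <;> norm_num))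
    · exact tang _ _ _ _ _ _ (11/4) (by norm_num) (by nlinarith [h7])
        (Or.inr (by rw [abs_of_nonneg] <;> norm_num))
    · exact tang _ _ _ _ _ _ (29/4) (by norm_num) (by nlinarith [h7])
        (Or.inl (by norm_num))
    -- j = 2 : center (-3, √7), radius 5
    · exact tang _ _ _ _ _ _ 4 (by norm_num) (by nlinarith [h7])
        (Or.inr (by rw [abs_of_nonneg] <;> norm_num))
    · exact tang _ _ _ _ _ _ 4 (by norm_num) (by nlinarith [h7])
        (Or.inr (by rw [abs_of_nonpos] <;> norm_num))
    · exact tang _ _ _ _ _ _ (29/4) (by norm_num) (by nlinarith [h7])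
        (Or.inl (by norm_num))
    · exact tang _ _ _ _ _ _ (11/4) (by norm_num) (by nlinarith [h7])
        (Or.inr (by rw [abs_of_nonneg] <;> norm_num))
    -- j = 3 : center (-3, -√7), radius 5
    · exact tang _ _ _ _ _ _ 4 (by norm_num) (by nlinarith [h7])
        (Or.inr (by rw [abs_of_nonneg] <;> norm_num))
    · exact tang _ _ _ _ _ _ 4 (by norm_num) (by nlinarith [h7])
        (Or.inr (by rw [abs_of_nonpos] <;> norm_num))
    · exact tang _ _ _ _ _ _ (29/4) (by norm_num) (by nlinarith [h7])
        (Or.inl (by norm_num))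
    · exact tang _ _ _ _ _ _ (11/4) (by norm_num) (by nlinarith [h7])
        (Or.inr (by rw [abs_of_nonneg] <;> norm_num))
    -- j = 4 : center (0, 5), radius 4
    · exact tang _ _ _ _ _ _ 5 (by norm_num) (by norm_num)
        (Or.inl (by norm_num))
    · exact tang _ _ _ _ _ _ 5 (by norm_num) (by norm_num)
        (Or.inr (by rw [abs_of_nonpos] <;> norm_num))
    · exact tang _ _ _ _ _ _ (25/4) (by norm_num) (by norm_num)
        (Or.inl (by norm_num))
    · exact tang _ _ _ _ _ _ (25/4) (by norm_num) (by norm_num)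
        (Or.inl (by norm_num))
    -- j = 5 : center (0, -5), radius 4
    · exact tang _ _ _ _ _ _ 5 (by norm_num) (by norm_num)
        (Or.inl (by norm_num))
    · exact tang _ _ _ _ _ _ 5 (by norm_num) (by norm_num)
        (Or.inr (by rw [abs_of_nonpos] <;> norm_num))
    · exact tang _ _ _ _ _ _ (25/4) (by norm_num) (by norm_num)
        (Or.inl (by norm_num))
    · exact tang _ _ _ _ _ _ (25/4) (by norm_num) (by norm_num)
        (Or.inl (by norm_num))
end
end

section
/- Let O ∈ ℝ², let 0 < r < R, and let α = (a, s) be a circle (s > 0) whose point set is disjoint from the point set of the circle (O, r) and from the point set of the circle (O, R). Then the set of circles that are tangent to all three circles (O, r), (O, R) and (a, s) is either empty or has exactly 8 elements. -/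
set_option maxHeartbeats 1000000

noncomputable section

open RealInnerProductSpace

lemma norm_eq_of_sq_eq {w : Plane} {ρ : ℝ} (hρ : 0 ≤ ρ) (h : ‖w‖ ^ 2 = ρ ^ 2) :
    ‖w‖ = ρ := by
  rw [← Real.sqrt_sq (norm_nonneg w), h, Real.sqrt_sq hρ]

lemma two_sphere_inter (O a : Plane) (ρ t : ℝ) (hρ : 0 ≤ ρ) (ht : 0 ≤ t)
    (hD : 0 < dist a O) (h1 : |ρ - t| ≤ dist a O) (h2 : dist a O ≤ ρ + t) :
    ∃ p q : Plane, {c : Plane | dist c O = ρ ∧ dist c a = t} = {p, q} ∧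
      (|ρ - t| < dist a O → dist a O < ρ + t → p ≠ q) := by
  set D := dist a O with hDdef
  have hDne : D ≠ 0 := ne_of_gt hD
  have hane : a - O ≠ 0 := by
    intro h0
    have hOa : a = O := sub_eq_zero.mp h0
    rw [hDdef, hOa, dist_self] at hD
    exact lt_irrefl _ hD
  set u : Plane := ‖a - O‖⁻¹ • (a - O) with hu
  have hDnorm : ‖a - O‖ = D := by rw [hDdef, dist_eq_norm]
  have hunorm : ‖u‖ = 1 := norm_smul_inv_norm hane
  have haO : a - O = D • u := by
    rw [hu, ← hDnorm, smul_smul, mul_inv_cancel₀ (by rw [hDnorm]; exact hDne), one_smul]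
  have hcard : Module.finrank ℝ Plane = Fintype.card (Fin 2) := by simp
  have horth : Orthonormal ℝ (Set.restrict {(0 : Fin 2)} (fun _ => u)) := by
    constructor
    · intro i
      exact hunorm
    · intro i j hij
      exact absurd (Subtype.ext (by
        have hi := i.2; have hj := j.2
        simp only [Set.mem_singleton_iff] at hi hj
        rw [hi, hj])) hij
  obtain ⟨B, hB⟩ := horth.exists_orthonormalBasis_extension_of_card_eq hcard
  have hB0 : B 0 = u := hB 0 rfl
  set v : Plane := B 1 with hv
  have hvnorm : ‖v‖ = 1 := B.orthonormal.1 1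
  have huv : ⟪u, v⟫ = 0 := by
    rw [← hB0]
    exact B.orthonormal.2 (by decide : (0 : Fin 2) ≠ 1)
  have hrepr : ∀ w : Plane, ⟪u, w⟫ • u + ⟪v, w⟫ • v = w := by
    intro w
    have := B.sum_repr' w
    rwa [Fin.sum_univ_two, hB0, ← hv] at this
  clear_value D u v
  clear hu hv hB hB0 hDdef
  -- norm of linear combination
  have hcomb : ∀ x y : ℝ, ‖x • u + y • v‖ ^ 2 = x ^ 2 + y ^ 2 := by
    intro x y
    have hxu : ‖x • u‖ = |x| := by rw [norm_smul, hunorm, mul_one, Real.norm_eq_abs]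
    have hyv : ‖y • v‖ = |y| := by rw [norm_smul, hvnorm, mul_one, Real.norm_eq_abs]
    rw [norm_add_sq_real, hxu, hyv, real_inner_smul_left, real_inner_smul_right, huv,
      sq_abs, sq_abs]
    ring
  obtain ⟨habs1, habs2⟩ := abs_sub_le_iff.mp h1
  set x₀ : ℝ := (D ^ 2 + ρ ^ 2 - t ^ 2) / (2 * D) with hx₀
  have hlin : 2 * D * x₀ = D ^ 2 + ρ ^ 2 - t ^ 2 := by
    rw [hx₀]; field_simp
  clear_value x₀
  have e1 : 2 * D * (ρ - x₀) = (t - (D - ρ)) * (t + (D - ρ)) := by linear_combination -hlin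
  have e2 : 2 * D * (ρ + x₀) = (D + ρ - t) * (D + ρ + t) := by linear_combination hlin
  have hA : 0 ≤ ρ - x₀ := by
    nlinarith [mul_nonneg (show (0:ℝ) ≤ t - (D - ρ) by linarith) (show (0:ℝ) ≤ t + (D - ρ) by linarith), e1, hD]
  have hBpos : 0 ≤ ρ + x₀ := by
    nlinarith [mul_nonneg (show (0:ℝ) ≤ D + ρ - t by linarith) (show (0:ℝ) ≤ D + ρ + t by linarith), e2, hD]
  have hsub : 0 ≤ ρ ^ 2 - x₀ ^ 2 := by nlinarith [mul_nonneg hA hBpos]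
  set y₀ : ℝ := Real.sqrt (ρ ^ 2 - x₀ ^ 2) with hy₀
  have hy₀sq : y₀ ^ 2 = ρ ^ 2 - x₀ ^ 2 := Real.sq_sqrt hsub
  have hy₀nonneg : 0 ≤ y₀ := Real.sqrt_nonneg _
  refine ⟨O + (x₀ • u + y₀ • v), O + (x₀ • u + (-y₀) • v), ?_, ?_⟩
  · ext c
    simp only [Set.mem_setOf_eq, Set.mem_insert_iff, Set.mem_singleton_iff]
    constructor
    · rintro ⟨hcO, hca⟩
      obtain ⟨x, y, hdecomp⟩ : ∃ x y : ℝ, x • u + y • v = c - O := ⟨_, _, hrepr (c - O)⟩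
      have hnw2 : x ^ 2 + y ^ 2 = ρ ^ 2 := by
        rw [← hcomb x y, hdecomp, ← dist_eq_norm, hcO]
      have hca2 : (x - D) ^ 2 + y ^ 2 = t ^ 2 := by
        have hca' : c - a = (x - D) • u + y • v := by
          have h' : c - a = (c - O) - (a - O) := by abel
          rw [h', haO, ← hdecomp]
          module
        rw [← hcomb (x - D) y, ← hca', ← dist_eq_norm, hca]
      have hxx₀ : x = x₀ := by
        have h2x : 2 * D * x = D ^ 2 + ρ ^ 2 - t ^ 2 := by linear_combination hnw2 - hca2
        have : 2 * D * x = 2 * D * x₀ := by rw [h2x, hlin]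
        have h2D : (2 : ℝ) * D ≠ 0 := by positivity
        exact mul_left_cancel₀ h2D this
      have hysq : y ^ 2 = y₀ ^ 2 := by rw [hy₀sq]; linear_combination hnw2 - (x + x₀) * hxx₀
      have hyy' : y = y₀ ∨ y = -y₀ := by
        have hz : (y - y₀) * (y + y₀) = 0 := by linear_combination hysq
        rcases mul_eq_zero.mp hz with h' | h'
        · left; linarith
        · right; linarith
      have hc : c = O + (x • u + y • v) := by rw [hdecomp]; abel
      rcases hyy' with hcase | hcase
      · left; rw [hc, hxx₀, hcase]
      · right; rw [hc, hxx₀, hcase]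
    · have hmem : ∀ yy : ℝ, yy ^ 2 = y₀ ^ 2 →
          dist (O + (x₀ • u + yy • v)) O = ρ ∧ dist (O + (x₀ • u + yy • v)) a = t := by
        intro yy hyy
        constructor
        · rw [dist_eq_norm, add_sub_cancel_left]
          refine norm_eq_of_sq_eq hρ ?_
          rw [hcomb, hyy, hy₀sq]; ring
        · rw [dist_eq_norm]
          have heq : O + (x₀ • u + yy • v) - a = (x₀ - D) • u + yy • v := by
            have h' : O + (x₀ • u + yy • v) - a = (x₀ • u + yy • v) - (a - O) := by abel
            rw [h', haO]; module
          rw [heq]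
          refine norm_eq_of_sq_eq ht ?_
          rw [hcomb, hyy, hy₀sq]
          linear_combination -hlin
      rintro (rfl | rfl)
      · exact hmem y₀ rfl
      · exact hmem (-y₀) (by ring)
  · intro hs1 hs2
    obtain ⟨hstr1, hstr2⟩ := abs_sub_lt_iff.mp hs1
    have hy₀pos : 0 < y₀ := by
      rw [hy₀]
      apply Real.sqrt_pos.mpr
      have hA' : 0 < ρ - x₀ := by
        nlinarith [mul_pos (show (0:ℝ) < t - (D - ρ) by linarith) (show (0:ℝ) < t + (D - ρ) by linarith), e1, hD]
      have hB' : 0 < ρ + x₀ := by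
        nlinarith [mul_pos (show (0:ℝ) < D + ρ - t by linarith) (show (0:ℝ) < D + ρ + t by linarith), e2, hD]
      nlinarith [mul_pos hA' hB']
    intro h
    have heq2 : (x₀ • u + y₀ • v) = (x₀ • u + (-y₀) • v) := add_left_cancel h
    have h2y : (2 * y₀) • v = 0 := by
      have hz := sub_eq_zero.mpr heq2
      rw [show x₀ • u + y₀ • v - (x₀ • u + (-y₀) • v) = (2 * y₀) • v by module] at hz
      exact hz
    have hvne : v ≠ 0 := by
      intro hv0
      rw [hv0, norm_zero] at hvnorm
      norm_num at hvnorm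
    rcases smul_eq_zero.mp h2y with h' | h'
    · nlinarith
    · exact hvne h'

lemma disjoint_spheres_cases (O a : Plane) (r s : ℝ) (hr : 0 < r) (hs : 0 < s)
    (h : Disjoint (Metric.sphere a s) (Metric.sphere O r)) :
    r + s < dist a O ∨ dist a O < |r - s| := by
  by_contra hc
  push_neg at hc
  obtain ⟨hle, hge⟩ := hc
  rcases eq_or_lt_of_le (dist_nonneg : (0:ℝ) ≤ dist a O) with hD0 | hDpos
  · -- a = O, r = s, spheres equal and nonempty
    have haO : a = O := by
      rw [← dist_eq_zero]; exact hD0.symm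
    have hrs : r = s := by
      have : |r - s| ≤ 0 := le_trans hge (le_of_eq hD0.symm)
      have := abs_nonneg (r - s)
      have h0 : |r - s| = 0 := le_antisymm ‹|r - s| ≤ 0› ‹0 ≤ |r - s|›
      have := abs_eq_zero.mp h0
      linarith
    have hne : (Metric.sphere O r).Nonempty := NormedSpace.sphere_nonempty.mpr hr.le
    obtain ⟨p, hp⟩ := hne
    exact Set.disjoint_left.mp h (by rw [haO, ← hrs]; exact hp) hp
  · obtain ⟨p, q, hpq, -⟩ := two_sphere_inter O a r s hr.le hs.le hDpos hge hle
    have hp : p ∈ {c : Plane | dist c O = r ∧ dist c a = s} := by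
      rw [hpq]; exact Set.mem_insert _ _
    exact Set.disjoint_left.mp h (hp.2 : dist p a = s) (hp.1 : dist p O = r)

lemma tangent_two_concentric {O c : Plane} {r R ρ : ℝ} (hr : 0 < r) (hrR : r < R)
    (hρ : 0 < ρ) (h1 : Tangent (c, ρ) (O, r)) (h2 : Tangent (c, ρ) (O, R)) :
    (ρ = (R - r) / 2 ∧ dist c O = (R + r) / 2) ∨
    (ρ = (R + r) / 2 ∧ dist c O = (R - r) / 2) := by
  obtain ⟨-, e1⟩ := h1
  obtain ⟨-, e2⟩ := h2
  simp only at e1 e2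
  rcases e1 with e1 | e1 <;> rcases e2 with e2 | e2
  · exfalso; rw [e1] at e2; linarith
  · -- dist = ρ + r = |ρ - R|
    left
    have hsq : (ρ + r) ^ 2 = (ρ - R) ^ 2 := by
      rw [← e1, ← sq_abs (ρ - R), ← e2]
    have hρval : ρ = (R - r) / 2 := by
      have hc : 2 * (r + R) * ρ = 2 * (r + R) * ((R - r) / 2) := by ring_nf; linear_combination hsq
      exact mul_left_cancel₀ (ne_of_gt (by linarith : (0:ℝ) < 2 * (r + R))) hc
    refine ⟨hρval, ?_⟩
    rw [e1, hρval]; ring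
  · -- |ρ - r| = ρ + R : impossible
    exfalso
    have hsq : (ρ - r) ^ 2 = (ρ + R) ^ 2 := by
      rw [← sq_abs (ρ - r), ← e1, e2]
    nlinarith [hsq, hρ, hr, hrR]
  · -- |ρ - r| = |ρ - R|
    right
    have hsq : (ρ - r) ^ 2 = (ρ - R) ^ 2 := by
      rw [← sq_abs (ρ - r), ← sq_abs (ρ - R), ← e1, ← e2]
    have hρval : ρ = (R + r) / 2 := by
      have hc : 2 * (R - r) * ρ = 2 * (R - r) * ((R + r) / 2) := by ring_nf; linear_combination hsq
      exact mul_left_cancel₀ (ne_of_gt (by linarith : (0:ℝ) < 2 * (R - r))) hc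
    refine ⟨hρval, ?_⟩
    rw [e1, hρval, abs_of_nonneg (by linarith)]; ring

lemma region_arith (r R s ρ dO dA D : ℝ) (hr : 0 < r) (hrR : r < R) (hs : 0 < s)
    (htri1 : D ≤ dA + dO) (htri2 : dO ≤ dA + D) (htri3 : dA ≤ dO + D)
    (Hr : r + s < D ∨ D < |r - s|) (HR : R + s < D ∨ D < |R - s|)
    (hfam : (ρ = (R - r) / 2 ∧ dO = (R + r) / 2) ∨ (ρ = (R + r) / 2 ∧ dO = (R - r) / 2))
    (he3 : dA = ρ + s ∨ dA = |ρ - s|) : r + s < D ∧ D < R - s := by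
  rcases hfam with ⟨rfl, rfl⟩ | ⟨rfl, rfl⟩
  · rcases he3 with rfl | rfl
    · constructor
      · rcases Hr with Hr | Hr
        · exact Hr
        · exfalso; rcases abs_cases (r - s) with ⟨er, _⟩ | ⟨er, _⟩ <;> linarith
      · rcases HR with HR | HR
        · exfalso; linarith
        · rcases abs_cases (R - s) with ⟨eR, _⟩ | ⟨eR, _⟩
          · linarith
          · exfalso; linarith
    · rcases abs_cases ((R - r) / 2 - s) with ⟨ea, hea⟩ | ⟨ea, hea⟩
      · constructor
        · rcases Hr with Hr | Hr
          · exact Hr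
          · exfalso; rcases abs_cases (r - s) with ⟨er, _⟩ | ⟨er, _⟩ <;> linarith
        · rcases HR with HR | HR
          · exfalso; linarith
          · rcases abs_cases (R - s) with ⟨eR, _⟩ | ⟨eR, _⟩
            · linarith
            · exfalso; linarith
      · exfalso
        rcases Hr with Hr | Hr
        · linarith
        · rcases HR with HR | HR
          · linarith
          · rcases abs_cases (R - s) with ⟨eR, _⟩ | ⟨eR, _⟩ <;> linarith
  · rcases he3 with rfl | rfl
    · constructor
      · rcases Hr with Hr | Hr
        · exact Hr
        · exfalso; rcases abs_cases (r - s) with ⟨er, _⟩ | ⟨er, _⟩ <;> linarith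
      · rcases HR with HR | HR
        · exfalso; linarith
        · rcases abs_cases (R - s) with ⟨eR, _⟩ | ⟨eR, _⟩
          · linarith
          · exfalso; linarith
    · rcases abs_cases ((R + r) / 2 - s) with ⟨ea, hea⟩ | ⟨ea, hea⟩
      · constructor
        · rcases Hr with Hr | Hr
          · exact Hr
          · exfalso; rcases abs_cases (r - s) with ⟨er, _⟩ | ⟨er, _⟩ <;> linarith
        · rcases HR with HR | HR
          · exfalso; linarith
          · rcases abs_cases (R - s) with ⟨eR, _⟩ | ⟨eR, _⟩
            · linarith
            · exfalso; linarith
      · exfalso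
        rcases HR with HR | HR
        · linarith
        · rcases abs_cases (R - s) with ⟨eR, _⟩ | ⟨eR, _⟩ <;> linarith

lemma mem_region {O a c : Plane} {r R s ρ : ℝ} (hr : 0 < r) (hrR : r < R) (hs : 0 < s)
    (Hr : r + s < dist a O ∨ dist a O < |r - s|)
    (HR : R + s < dist a O ∨ dist a O < |R - s|)
    (hρ : 0 < ρ) (h1 : Tangent (c, ρ) (O, r)) (h2 : Tangent (c, ρ) (O, R))
    (h3 : Tangent (c, ρ) (a, s)) :
    r + s < dist a O ∧ dist a O < R - s := by
  obtain ⟨-, e3⟩ := h3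
  simp only at e3
  have htri1 : dist a O ≤ dist c a + dist c O := by
    rw [dist_comm c a]; exact dist_triangle a c O
  have htri2 : dist c O ≤ dist c a + dist a O := dist_triangle c a O
  have htri3 : dist c a ≤ dist c O + dist a O := by
    rw [dist_comm a O]; exact dist_triangle c O a
  exact region_arith r R s ρ (dist c O) (dist c a) (dist a O) hr hrR hs htri1 htri2 htri3
    Hr HR (tangent_two_concentric hr hrR hρ h1 h2) e3

/-- Lemma 2: two concentric circles and a third circle disjoint from both have either
no common tangent circle or exactly 8 of them. -/
theorem concentric_plus_disjoint_circle
    (O a : Plane) (r R s : ℝ) (hr : 0 < r) (hrR : r < R) (hs : 0 < s)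
    (hdisj_r : Disjoint (Metric.sphere a s) (Metric.sphere O r))
    (hdisj_R : Disjoint (Metric.sphere a s) (Metric.sphere O R)) :
    {d : Plane × ℝ | 0 < d.2 ∧ Tangent d (O, r) ∧ Tangent d (O, R) ∧ Tangent d (a, s)} = ∅ ∨
    {d : Plane × ℝ | 0 < d.2 ∧ Tangent d (O, r) ∧ Tangent d (O, R) ∧ Tangent d (a, s)}.encard
      = 8 := by
  have hR : 0 < R := hr.trans hrR
  have Hr := disjoint_spheres_cases O a r s hr hs hdisj_r
  have HR := disjoint_spheres_cases O a R s hR hs hdisj_R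
  by_cases hW : r + s < dist a O ∧ dist a O < R - s
  · right
    obtain ⟨hW1, hW2⟩ := hW
    have hDpos : 0 < dist a O := lt_of_le_of_lt (by positivity) hW1
    have hsk : s < (R - r) / 2 := by linarith
    have habs_rs : |r - s| < dist a O :=
      lt_trans (abs_lt.mpr ⟨by linarith, by linarith⟩) hW1
    -- the four 2-point circle intersections
    obtain ⟨p1, q1, hC1, hne1'⟩ := two_sphere_inter O a ((R + r) / 2) ((R - r) / 2 + s)
      (by linarith) (by linarith) hDpos
      (by rw [show (R + r) / 2 - ((R - r) / 2 + s) = r - s from by ring]; exact habs_rs.le)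
      (by linarith)
    have hne1 : p1 ≠ q1 := hne1'
      (by rw [show (R + r) / 2 - ((R - r) / 2 + s) = r - s from by ring]; exact habs_rs)
      (by linarith)
    obtain ⟨p2, q2, hC2, hne2'⟩ := two_sphere_inter O a ((R + r) / 2) ((R - r) / 2 - s)
      (by linarith) (by linarith) hDpos
      (by rw [show (R + r) / 2 - ((R - r) / 2 - s) = r + s from by ring,
            abs_of_pos (by linarith)]; linarith)
      (by linarith)
    have hne2 : p2 ≠ q2 := hne2'
      (by rw [show (R + r) / 2 - ((R - r) / 2 - s) = r + s from by ring,
            abs_of_pos (by linarith)]; linarith)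
      (by linarith)
    obtain ⟨p3, q3, hC3, hne3'⟩ := two_sphere_inter O a ((R - r) / 2) ((R + r) / 2 + s)
      (by linarith) (by linarith) hDpos
      (by rw [show (R - r) / 2 - ((R + r) / 2 + s) = -(r + s) from by ring, abs_neg,
            abs_of_pos (by linarith)]; linarith)
      (by linarith)
    have hne3 : p3 ≠ q3 := hne3'
      (by rw [show (R - r) / 2 - ((R + r) / 2 + s) = -(r + s) from by ring, abs_neg,
            abs_of_pos (by linarith)]; linarith)
      (by linarith)
    have e4abs : |(R - r) / 2 - ((R + r) / 2 - s)| = |r - s| := by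
      rw [show (R - r) / 2 - ((R + r) / 2 - s) = s - r by ring]
      exact abs_sub_comm s r
    obtain ⟨p4, q4, hC4, hne4'⟩ := two_sphere_inter O a ((R - r) / 2) ((R + r) / 2 - s)
      (by linarith) (by linarith) hDpos
      (by rw [e4abs]; exact habs_rs.le)
      (by linarith)
    have hne4 : p4 ≠ q4 := hne4' (by rw [e4abs]; exact habs_rs) (by linarith)
    -- the structure of the solution set
    have hSeq : {d : Plane × ℝ | 0 < d.2 ∧ Tangent d (O, r) ∧ Tangent d (O, R) ∧
          Tangent d (a, s)} =
        ((fun c : Plane => (c, (R - r) / 2)) ''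
          ({c : Plane | dist c O = (R + r) / 2 ∧ dist c a = (R - r) / 2 + s} ∪
           {c : Plane | dist c O = (R + r) / 2 ∧ dist c a = (R - r) / 2 - s})) ∪
        ((fun c : Plane => (c, (R + r) / 2)) ''
          ({c : Plane | dist c O = (R - r) / 2 ∧ dist c a = (R + r) / 2 + s} ∪
           {c : Plane | dist c O = (R - r) / 2 ∧ dist c a = (R + r) / 2 - s})) := by
      ext ⟨c, ρ⟩
      simp only [Set.mem_setOf_eq, Set.mem_union, Set.mem_image, Prod.mk.injEq]
      constructor
      · rintro ⟨hρ, h1, h2, h3⟩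
        obtain ⟨-, e3⟩ := h3
        simp only at e3
        rcases tangent_two_concentric hr hrR hρ h1 h2 with ⟨hρv, hcO⟩ | ⟨hρv, hcO⟩
        · refine Or.inl ⟨c, ?_, rfl, hρv.symm⟩
          rcases e3 with e3 | e3
          · exact Or.inl ⟨hcO, by rw [e3, hρv]⟩
          · refine Or.inr ⟨hcO, ?_⟩
            rw [e3, hρv, abs_of_nonneg (by linarith)]
        · refine Or.inr ⟨c, ?_, rfl, hρv.symm⟩
          rcases e3 with e3 | e3
          · exact Or.inl ⟨hcO, by rw [e3, hρv]⟩
          · refine Or.inr ⟨hcO, ?_⟩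
            rw [e3, hρv, abs_of_nonneg (by linarith)]
      · rintro (⟨c', hc', rfl, rfl⟩ | ⟨c', hc', rfl, rfl⟩)
        · have hcO : dist c' O = (R + r) / 2 := by rcases hc' with ⟨h, -⟩ | ⟨h, -⟩ <;> exact h
          have hcOne : c' ≠ O := dist_pos.mp (by rw [hcO]; linarith)
          have hcane : c' ≠ a := by
            refine dist_pos.mp ?_
            rcases hc' with ⟨-, h⟩ | ⟨-, h⟩ <;> rw [h] <;> linarith
          refine ⟨by simp; linarith, ⟨fun hEq => hcOne (congrArg Prod.fst hEq), Or.inl ?_⟩,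
            ⟨fun hEq => hcOne (congrArg Prod.fst hEq), Or.inr ?_⟩,
            ⟨fun hEq => hcane (congrArg Prod.fst hEq), ?_⟩⟩
          · show dist c' O = (R - r) / 2 + r
            rw [hcO]; ring
          · show dist c' O = |(R - r) / 2 - R|
            rw [show (R - r) / 2 - R = -((R + r) / 2) from by ring, abs_neg,
              abs_of_nonneg (by linarith)]
            exact hcO
          · rcases hc' with ⟨-, h⟩ | ⟨-, h⟩
            · exact Or.inl h
            · refine Or.inr ?_
              show dist c' a = |(R - r) / 2 - s|
              rw [abs_of_nonneg (by linarith)]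
              exact h
        · have hcO : dist c' O = (R - r) / 2 := by rcases hc' with ⟨h, -⟩ | ⟨h, -⟩ <;> exact h
          have hcOne : c' ≠ O := dist_pos.mp (by rw [hcO]; linarith)
          have hcane : c' ≠ a := by
            refine dist_pos.mp ?_
            rcases hc' with ⟨-, h⟩ | ⟨-, h⟩ <;> rw [h] <;> linarith
          refine ⟨by simp; linarith, ⟨fun hEq => hcOne (congrArg Prod.fst hEq), Or.inr ?_⟩,
            ⟨fun hEq => hcOne (congrArg Prod.fst hEq), Or.inr ?_⟩,
            ⟨fun hEq => hcane (congrArg Prod.fst hEq), ?_⟩⟩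
          · show dist c' O = |(R + r) / 2 - r|
            rw [show (R + r) / 2 - r = (R - r) / 2 from by ring,
              abs_of_nonneg (by linarith)]
            exact hcO
          · show dist c' O = |(R + r) / 2 - R|
            rw [show (R + r) / 2 - R = -((R - r) / 2) from by ring, abs_neg,
              abs_of_nonneg (by linarith)]
            exact hcO
          · rcases hc' with ⟨-, h⟩ | ⟨-, h⟩
            · exact Or.inl h
            · refine Or.inr ?_
              show dist c' a = |(R + r) / 2 - s|
              rw [abs_of_nonneg (by linarith)]
              exact h
    -- counting
    have hinj1 : Function.Injective (fun c : Plane => (c, (R - r) / 2)) :=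
      fun c1 c2 h => congrArg Prod.fst h
    have hinj2 : Function.Injective (fun c : Plane => (c, (R + r) / 2)) :=
      fun c1 c2 h => congrArg Prod.fst h
    have hd12 : Disjoint {c : Plane | dist c O = (R + r) / 2 ∧ dist c a = (R - r) / 2 + s}
        {c : Plane | dist c O = (R + r) / 2 ∧ dist c a = (R - r) / 2 - s} := by
      rw [Set.disjoint_left]
      rintro c ⟨-, e1⟩ ⟨-, e2⟩
      rw [e1] at e2; linarith
    have hd34 : Disjoint {c : Plane | dist c O = (R - r) / 2 ∧ dist c a = (R + r) / 2 + s}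
        {c : Plane | dist c O = (R - r) / 2 ∧ dist c a = (R + r) / 2 - s} := by
      rw [Set.disjoint_left]
      rintro c ⟨-, e1⟩ ⟨-, e2⟩
      rw [e1] at e2; linarith
    have hdtop : Disjoint
        ((fun c : Plane => (c, (R - r) / 2)) ''
          ({c : Plane | dist c O = (R + r) / 2 ∧ dist c a = (R - r) / 2 + s} ∪
           {c : Plane | dist c O = (R + r) / 2 ∧ dist c a = (R - r) / 2 - s}))
        ((fun c : Plane => (c, (R + r) / 2)) ''
          ({c : Plane | dist c O = (R - r) / 2 ∧ dist c a = (R + r) / 2 + s} ∪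
           {c : Plane | dist c O = (R - r) / 2 ∧ dist c a = (R + r) / 2 - s})) := by
      rw [Set.disjoint_left]
      rintro d ⟨c1, -, rfl⟩ ⟨c2, -, hEq⟩
      have := congrArg Prod.snd hEq
      simp only at this
      linarith
    rw [hSeq, Set.encard_union_eq hdtop, hinj1.encard_image _,
      hinj2.encard_image _, Set.encard_union_eq hd12,
      Set.encard_union_eq hd34, hC1, hC2, hC3, hC4, Set.encard_pair hne1,
      Set.encard_pair hne2, Set.encard_pair hne3, Set.encard_pair hne4]
    rfl
  · left
    rw [Set.eq_empty_iff_forall_notMem]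
    rintro ⟨c, ρ⟩ ⟨hρ, h1, h2, h3⟩
    exact hW (mem_region hr hrR hs Hr HR hρ h1 h2 h3)
end
end

section
/- Let O ∈ ℝ² and 0 < r < R. Let P = (p, ρ) and Q = (q, ρ) be circles with ρ > 0, dist O p = r + ρ, dist O p = R − ρ, q = 2·O − p (the point reflection of p in O), and p ≠ q. Let α = (a, s) and β = (b, t) be circles lying strictly inside the annulus, i.e. r + s < dist O a, dist O a + s < R, r + t < dist O b, and dist O b + t < R. If α is tangent to both P and Q and β is tangent to both P and Q, then the points O, a, b are collinear. -/
open scoped RealInnerProductSpace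

noncomputable section

lemma key_eq (O p q x : Plane) (r ρ u : ℝ)
    (hr : 0 < r) (hρ : 0 < ρ) (hu : 0 < u)
    (hOp : dist O p = r + ρ) (hq : q = (2 : ℝ) • O - p)
    (hx1 : r + u < dist O x) (hx2 : dist O x + u < r + 2 * ρ)
    (hP : Tangent (x, u) (p, ρ)) (hQ : Tangent (x, u) (q, ρ)) :
    dist x p = dist x q := by
  have huρ : u < ρ := by linarith
  have habs : |u - ρ| = ρ - u := by rw [abs_of_nonpos (by linarith)]; ring
  have hpq : dist p q = 2 * (r + ρ) := by
    have : p - q = (2 : ℝ) • (p - O) := by rw [hq]; module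
    rw [dist_eq_norm, this, norm_smul]
    rw [dist_eq_norm] at hOp
    rw [show ‖p - O‖ = r + ρ by rwa [norm_sub_rev]]
    rw [Real.norm_ofNat]
  obtain ⟨-, hP⟩ := hP
  obtain ⟨-, hQ⟩ := hQ
  simp only at hP hQ
  rw [habs] at hP hQ
  have t1 := dist_triangle p x q
  rw [dist_comm p x, hpq] at t1
  rcases hP with hP | hP <;> rcases hQ with hQ | hQ
  · rw [hP, hQ]
  · exfalso; rw [hP, hQ] at t1; linarith
  · exfalso; rw [hP, hQ] at t1; linarith
  · rw [hP, hQ]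

/-- Lemma 8: if two circles strictly inside the annulus are both tangent to two opposite
type-A solutions, then their centers are collinear with the common center. -/
theorem opposite_typeA_solutions_force_same_diameter
    (O p q a b : Plane) (r R ρ s t : ℝ)
    (hr : 0 < r) (hrR : r < R) (hρ : 0 < ρ)
    (hpA : dist O p = r + ρ) (hpA' : dist O p = R - ρ)
    (hq : q = (2 : ℝ) • O - p) (hpq : p ≠ q)
    (hs : 0 < s) (ht : 0 < t)
    (ha₁ : r + s < dist O a) (ha₂ : dist O a + s < R)
    (hb₁ : r + t < dist O b) (hb₂ : dist O b + t < R)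
    (hαP : Tangent (a, s) (p, ρ)) (hαQ : Tangent (a, s) (q, ρ))
    (hβP : Tangent (b, t) (p, ρ)) (hβQ : Tangent (b, t) (q, ρ)) :
    Collinear ℝ ({O, a, b} : Set Plane) := by
  have hR : R = r + 2 * ρ := by linarith
  rw [hR] at ha₂ hb₂
  have hda : dist a p = dist a q := key_eq O p q a r ρ s hr hρ hs hpA hq ha₁ ha₂ hαP hαQ
  have hdb : dist b p = dist b q := key_eq O p q b r ρ t hr hρ ht hpA hq hb₁ hb₂ hβP hβQ
  -- turn equal distances into orthogonality
  have hv : p - O ≠ 0 := by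
    intro h
    have : dist O p = 0 := by rw [dist_eq_norm, norm_sub_rev, h, norm_zero]
    linarith
  have orth : ∀ x : Plane, dist x p = dist x q →
      inner ℝ (p - O) (x - O) = (0:ℝ) := by
    intro x h
    have h1 : x - p = (x - O) - (p - O) := by abel
    have h2 : x - q = (x - O) + (p - O) := by rw [hq]; module
    rw [dist_eq_norm, dist_eq_norm, h1, h2] at h
    have := congrArg (· ^ 2) h
    beta_reduce at this
    rw [norm_sub_sq_real, norm_add_sq_real] at this
    have hz : inner ℝ (x - O) (p - O) = (0:ℝ) := by nlinarith
    rw [real_inner_comm]; exact hz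
  -- the orthogonal complement of span(p-O) is 1-dimensional
  set W := (ℝ ∙ (p - O))ᗮ with hW
  have hWa : a - O ∈ W := by
    rw [hW, Submodule.mem_orthogonal_singleton_iff_inner_right]
    exact orth a hda
  have hWb : b - O ∈ W := by
    rw [hW, Submodule.mem_orthogonal_singleton_iff_inner_right]
    exact orth b hdb
  have hdim : Module.finrank ℝ W ≤ 1 := by
    have h1 : Module.finrank ℝ (ℝ ∙ (p - O)) = 1 := finrank_span_singleton hv
    have h2 := Submodule.finrank_add_finrank_orthogonal (𝕜 := ℝ) (ℝ ∙ (p - O))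
    have h3 : Module.finrank ℝ Plane = 2 := by simp
    rw [hW]
    omega
  obtain ⟨v, hvall⟩ := finrank_le_one_iff.mp hdim
  obtain ⟨ca, hca⟩ := hvall ⟨a - O, hWa⟩
  obtain ⟨cb, hcb⟩ := hvall ⟨b - O, hWb⟩
  apply collinear_iff_of_mem (p₀ := O) (Set.mem_insert _ _) |>.mpr
  refine ⟨(v : Plane), ?_⟩
  intro x hx
  rcases hx with rfl | rfl | rfl
  · exact ⟨0, by simp⟩
  · exact ⟨ca, by have := congrArg Subtype.val hca; simp at this; rw [this]; simp⟩
  · exact ⟨cb, by have := congrArg Subtype.val hcb; simp at this; rw [this]; simp⟩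
end
end

section
/- Let O ∈ ℝ², 0 < r < R, and let α = (a, s) and β = (b, t) be circles lying strictly inside the annulus (r + s < dist O a, dist O a + s < R, r + t < dist O b, dist O b + t < R) such that O, a, b are NOT collinear. Suppose X is a set of four pairwise distinct circles, each tangent to both α and β, and either every circle of X is an annulus solution of type A or every circle of X is an annulus solution of type B. Then every circle of X is of type B, the inner product ⟪a − O, b − O⟫ equals 0 (α and β lie on perpendicular diameters), and the set of centers of the circles of X is invariant under the point reflection z ↦ 2·O − z. -/
noncomputable section

/-- Annulus solution of type A for the concentric circles (O, r), (O, R): tangent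
externally to the inner circle and internally to the outer one. -/
def TypeA (O : Plane) (r R : ℝ) (d : Plane × ℝ) : Prop :=
  dist O d.1 = r + d.2 ∧ dist O d.1 = R - d.2

/-- Annulus solution of type B for the concentric circles (O, r), (O, R): contains the
inner circle and lies inside the outer one. -/
def TypeB (O : Plane) (r R : ℝ) (d : Plane × ℝ) : Prop :=
  dist O d.1 = d.2 - r ∧ dist O d.1 = R - d.2


open scoped RealInnerProductSpace

lemma core0 (y0 y1 z0 z1 w0 w1 : ℝ)
    (hyz : y0^2 + y1^2 = z0^2 + z1^2) (hyw : y0^2 + y1^2 = w0^2 + w1^2)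
    (hdet : (y0 - z0) * (y1 - w1) - (y1 - z1) * (y0 - w0) = 0)
    (ha0 : y0 ≠ z0)
    (hne2 : ¬ (y0 = w0 ∧ y1 = w1)) (hne3 : ¬ (z0 = w0 ∧ z1 = w1)) : False := by
  have ha0' : y0 - z0 ≠ 0 := sub_ne_zero.mpr ha0
  have hL : (0:ℝ) < (y0-z0)^2 + (y1-z1)^2 := by positivity
  have h1 : 2*((y0-z0)*y0 + (y1-z1)*y1) = (y0-z0)^2 + (y1-z1)^2 := by linear_combination hyz
  have h2 : 2*((y0-w0)*y0 + (y1-w1)*y1) = (y0-w0)^2 + (y1-w1)^2 := by linear_combination hyw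
  have h3 : (y0-w0)*((y0-z0)^2+(y1-z1)^2) = (y0-z0)*((y0-w0)^2+(y1-w1)^2) := by
    linear_combination (y0-z0)*h2 - (y0-w0)*h1 - 2*y1*hdet
  have key : ((y0-z0)*((y0-z0)^2+(y1-z1)^2)) * ((y0-w0)*(w0-z0)) = 0 := by
    linear_combination (y0-z0)^2*h3 + (y0-z0)*((y0-z0)*(y1-w1)+(y1-z1)*(y0-w0))*hdet
  have key2 : (y0 - w0) * (w0 - z0) = 0 :=
    (mul_eq_zero.mp key).resolve_left (mul_ne_zero ha0' hL.ne')
  rcases mul_eq_zero.mp key2 with h | h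
  · -- y0 = w0; then from hdet, y1 = w1
    have hw1 : (y0 - z0) * (y1 - w1) = 0 := by linear_combination hdet + (y1-z1)*h
    have := (mul_eq_zero.mp hw1).resolve_left ha0'
    exact hne2 ⟨by linarith, by linarith⟩
  · -- w0 = z0; then from hdet, w1 = z1
    have hw1 : (y0 - z0) * (y1 - w1 - (y1 - z1)) = 0 := by
      linear_combination hdet - (y1 - z1)*h
    have := (mul_eq_zero.mp hw1).resolve_left ha0'
    exact hne3 ⟨by linarith, by linarith⟩

lemma three_pts (y0 y1 z0 z1 w0 w1 p0 p1 : ℝ)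
    (hyz : y0^2+y1^2 = z0^2+z1^2) (hyw : y0^2+y1^2 = w0^2+w1^2)
    (hpz : y0*p0+y1*p1 = z0*p0+z1*p1) (hpw : y0*p0+y1*p1 = w0*p0+w1*p1)
    (hne1 : ¬(y0 = z0 ∧ y1 = z1)) (hne2 : ¬(y0 = w0 ∧ y1 = w1))
    (hne3 : ¬(z0 = w0 ∧ z1 = w1)) :
    p0 = 0 ∧ p1 = 0 := by
  by_contra hc
  rw [not_and_or] at hc
  have hdet : (y0-z0)*(y1-w1) - (y1-z1)*(y0-w0) = 0 := by
    rcases hc with hp | hp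
    · have e : ((y0-z0)*(y1-w1) - (y1-z1)*(y0-w0)) * p0 = 0 := by
        linear_combination (y1-w1)*hpz - (y1-z1)*hpw
      exact (mul_eq_zero.mp e).resolve_right hp
    · have e : ((y0-z0)*(y1-w1) - (y1-z1)*(y0-w0)) * p1 = 0 := by
        linear_combination (y0-z0)*hpw - (y0-w0)*hpz
      exact (mul_eq_zero.mp e).resolve_right hp
  by_cases hy0 : y0 = z0
  · have hy1 : y1 ≠ z1 := fun h => hne1 ⟨hy0, h⟩
    exact core0 y1 y0 z1 z0 w1 w0 (by linarith) (by linarith)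
      (by linear_combination -hdet) hy1 (fun ⟨u,v⟩ => hne2 ⟨v,u⟩) (fun ⟨u,v⟩ => hne3 ⟨v,u⟩)
  · exact core0 y0 y1 z0 z1 w0 w1 hyz hyw hdet hy0 hne2 hne3

lemma inner_coords (x y : Plane) : ⟪x, y⟫ = x 0 * y 0 + x 1 * y 1 := by
  simp [PiLp.inner_apply, RCLike.inner_apply, Fin.sum_univ_two]
  ring

lemma dist_sq_coords (x y : Plane) : dist x y ^ 2 = (x 0 - y 0)^2 + (x 1 - y 1)^2 := by
  rw [EuclideanSpace.dist_eq, Real.sq_sqrt (by positivity)]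
  simp [Fin.sum_univ_two, Real.dist_eq, sq_abs]

lemma collinear_of_det (O a b : Plane)
    (h : (a 0 - O 0) * (b 1 - O 1) - (a 1 - O 1) * (b 0 - O 0) = 0) :
    Collinear ℝ ({O, a, b} : Set Plane) := by
  rw [collinear_iff_of_mem (Set.mem_insert O {a, b})]
  by_cases hA : a = O
  · refine ⟨b - O, ?_⟩
    rintro p (rfl | rfl | rfl)
    · exact ⟨0, by simp⟩
    · exact ⟨0, by simp [hA]⟩
    · exact ⟨1, by simp⟩
  · have hne : a 0 - O 0 ≠ 0 ∨ a 1 - O 1 ≠ 0 := by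
      by_contra hc
      push_neg at hc
      exact hA (by ext i; fin_cases i <;> simp <;> linarith [hc.1, hc.2])
    refine ⟨a - O, ?_⟩
    rintro p (rfl | rfl | rfl)
    · exact ⟨0, by simp⟩
    · exact ⟨1, by simp⟩
    · rcases hne with h0 | h0
      · refine ⟨(p 0 - O 0)/(a 0 - O 0), ?_⟩
        ext i
        fin_cases i
        · simp
          field_simp
          ring
        · simp
          field_simp
          linear_combination h
      · refine ⟨(p 1 - O 1)/(a 1 - O 1), ?_⟩
        ext i
        fin_cases i
        · simp
          field_simp
          linear_combination -h
        · simp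
          field_simp
          ring

set_option maxHeartbeats 1000000 in
lemma main_aux (O a b : Plane) (m ρ s t : ℝ)
    (hρ : 0 < ρ) (hs : 0 < s) (ht : 0 < t)
    (hncol : ¬ Collinear ℝ ({O, a, b} : Set Plane))
    (S : Set Plane) (hScard : S.encard = 4)
    (hdist : ∀ x ∈ S, dist O x = m)
    (hta : ∀ x ∈ S, dist x a ^ 2 = (ρ + s)^2 ∨ dist x a ^ 2 = (ρ - s)^2)
    (htb : ∀ x ∈ S, dist x b ^ 2 = (ρ + t)^2 ∨ dist x b ^ 2 = (ρ - t)^2) :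
    dist O a ^ 2 = s^2 + ρ^2 - m^2 ∧ dist O b ^ 2 = t^2 + ρ^2 - m^2 ∧
      ⟪a - O, b - O⟫ = 0 ∧ (fun z : Plane => (2:ℝ) • O - z) '' S = S := by
  classical
  have hdet : (a 0 - O 0) * (b 1 - O 1) - (a 1 - O 1) * (b 0 - O 0) ≠ 0 :=
    fun h => hncol (collinear_of_det O a b h)
  have hdc : ∀ x ∈ S, (x 0 - O 0)^2 + (x 1 - O 1)^2 = m^2 := by
    intro x hx
    have h2 := dist_sq_coords O x
    rw [hdist x hx] at h2
    linear_combination -h2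
  obtain ⟨c1, hc1⟩ : ∃ c : ℝ, c = (m^2 + ((a 0 - O 0)^2 + (a 1 - O 1)^2) - (ρ+s)^2)/2 := ⟨_, rfl⟩
  obtain ⟨c2, hc2⟩ : ∃ c : ℝ, c = (m^2 + ((a 0 - O 0)^2 + (a 1 - O 1)^2) - (ρ-s)^2)/2 := ⟨_, rfl⟩
  obtain ⟨e1, he1⟩ : ∃ c : ℝ, c = (m^2 + ((b 0 - O 0)^2 + (b 1 - O 1)^2) - (ρ+t)^2)/2 := ⟨_, rfl⟩
  obtain ⟨e2, he2⟩ : ∃ c : ℝ, c = (m^2 + ((b 0 - O 0)^2 + (b 1 - O 1)^2) - (ρ-t)^2)/2 := ⟨_, rfl⟩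
  have hPa : ∀ x ∈ S, (x 0 - O 0)*(a 0 - O 0) + (x 1 - O 1)*(a 1 - O 1) = c1 ∨
      (x 0 - O 0)*(a 0 - O 0) + (x 1 - O 1)*(a 1 - O 1) = c2 := by
    intro x hx
    have hx2 := hdc x hx
    have hda := dist_sq_coords x a
    rcases hta x hx with h | h
    · left; rw [h] at hda; linear_combination hx2/2 + hda/2 - hc1
    · right; rw [h] at hda; linear_combination hx2/2 + hda/2 - hc2
  have hQb : ∀ x ∈ S, (x 0 - O 0)*(b 0 - O 0) + (x 1 - O 1)*(b 1 - O 1) = e1 ∨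
      (x 0 - O 0)*(b 0 - O 0) + (x 1 - O 1)*(b 1 - O 1) = e2 := by
    intro x hx
    have hx2 := hdc x hx
    have hdb := dist_sq_coords x b
    rcases htb x hx with h | h
    · left; rw [h] at hdb; linear_combination hx2/2 + hdb/2 - he1
    · right; rw [h] at hdb; linear_combination hx2/2 + hdb/2 - he2
  have hinj : ∀ x y : Plane,
      (x 0 - O 0)*(a 0 - O 0) + (x 1 - O 1)*(a 1 - O 1) =
        (y 0 - O 0)*(a 0 - O 0) + (y 1 - O 1)*(a 1 - O 1) →
      (x 0 - O 0)*(b 0 - O 0) + (x 1 - O 1)*(b 1 - O 1) =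
        (y 0 - O 0)*(b 0 - O 0) + (y 1 - O 1)*(b 1 - O 1) → x = y := by
    intro x y h1 h2
    have e0 : (x 0 - y 0) * ((a 0 - O 0) * (b 1 - O 1) - (a 1 - O 1) * (b 0 - O 0)) = 0 := by
      linear_combination (b 1 - O 1) * h1 - (a 1 - O 1) * h2
    have e1' : (x 1 - y 1) * ((a 0 - O 0) * (b 1 - O 1) - (a 1 - O 1) * (b 0 - O 0)) = 0 := by
      linear_combination (a 0 - O 0) * h2 - (b 0 - O 0) * h1
    have g0 := (mul_eq_zero.mp e0).resolve_right hdet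
    have g1 := (mul_eq_zero.mp e1').resolve_right hdet
    ext i; fin_cases i
    · show x 0 = y 0; linarith
    · show x 1 = y 1; linarith
  set F : Plane → ℝ × ℝ := fun x =>
    ((x 0 - O 0)*(a 0 - O 0) + (x 1 - O 1)*(a 1 - O 1),
     (x 0 - O 0)*(b 0 - O 0) + (x 1 - O 1)*(b 1 - O 1)) with hF
  have hFinj : Set.InjOn F S := by
    intro x _ y _ hxy
    exact hinj x y (congrArg Prod.fst hxy) (congrArg Prod.snd hxy)
  have hTfin : ({((c1,e1):ℝ×ℝ), (c1,e2), (c2,e1), (c2,e2)} : Set (ℝ×ℝ)).Finite :=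
    Set.toFinite _
  have hsub : F '' S ⊆ {((c1,e1):ℝ×ℝ), (c1,e2), (c2,e1), (c2,e2)} := by
    rintro _ ⟨x, hx, rfl⟩
    rcases hPa x hx with h | h <;> rcases hQb x hx with h' | h' <;>
      simp only [Set.mem_insert_iff, Set.mem_singleton_iff, hF, Prod.mk.injEq] <;> tauto
  have hT4 : ({((c1,e1):ℝ×ℝ), (c1,e2), (c2,e1), (c2,e2)} : Set (ℝ×ℝ)).encard ≤ 4 := by
    refine le_trans (Set.encard_insert_le _ _) ?_
    refine le_trans (add_le_add_left (Set.encard_insert_le _ _) 1) ?_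
    refine le_trans (add_le_add_left (add_le_add_left (Set.encard_insert_le _ _) 1) 1) ?_
    rw [Set.encard_singleton]
    decide
  have himg : F '' S = {((c1,e1):ℝ×ℝ), (c1,e2), (c2,e1), (c2,e2)} := by
    apply (hTfin.subset hsub).eq_of_subset_of_encard_le hsub
    rw [hFinj.encard_image, hScard]; exact hT4
  obtain ⟨x11, hx11, hF11⟩ : ∃ x ∈ S, F x = (c1, e1) := by
    have h : ((c1,e1):ℝ×ℝ) ∈ F '' S := by rw [himg]; simp
    rcases h with ⟨x, hx, hfx⟩; exact ⟨x, hx, hfx⟩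
  obtain ⟨x12, hx12, hF12⟩ : ∃ x ∈ S, F x = (c1, e2) := by
    have h : ((c1,e2):ℝ×ℝ) ∈ F '' S := by rw [himg]; simp
    rcases h with ⟨x, hx, hfx⟩; exact ⟨x, hx, hfx⟩
  obtain ⟨x21, hx21, hF21⟩ : ∃ x ∈ S, F x = (c2, e1) := by
    have h : ((c2,e1):ℝ×ℝ) ∈ F '' S := by rw [himg]; simp
    rcases h with ⟨x, hx, hfx⟩; exact ⟨x, hx, hfx⟩
  obtain ⟨x22, hx22, hF22⟩ : ∃ x ∈ S, F x = (c2, e2) := by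
    have h : ((c2,e2):ℝ×ℝ) ∈ F '' S := by rw [himg]; simp
    rcases h with ⟨x, hx, hfx⟩; exact ⟨x, hx, hfx⟩
  have hP11 : (x11 0 - O 0)*(a 0 - O 0) + (x11 1 - O 1)*(a 1 - O 1) = c1 := congrArg Prod.fst hF11
  have hQ11 : (x11 0 - O 0)*(b 0 - O 0) + (x11 1 - O 1)*(b 1 - O 1) = e1 := congrArg Prod.snd hF11
  have hP12 : (x12 0 - O 0)*(a 0 - O 0) + (x12 1 - O 1)*(a 1 - O 1) = c1 := congrArg Prod.fst hF12
  have hQ12 : (x12 0 - O 0)*(b 0 - O 0) + (x12 1 - O 1)*(b 1 - O 1) = e2 := congrArg Prod.snd hF12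
  have hP21 : (x21 0 - O 0)*(a 0 - O 0) + (x21 1 - O 1)*(a 1 - O 1) = c2 := congrArg Prod.fst hF21
  have hQ21 : (x21 0 - O 0)*(b 0 - O 0) + (x21 1 - O 1)*(b 1 - O 1) = e1 := congrArg Prod.snd hF21
  have hP22 : (x22 0 - O 0)*(a 0 - O 0) + (x22 1 - O 1)*(a 1 - O 1) = c2 := congrArg Prod.fst hF22
  have hQ22 : (x22 0 - O 0)*(b 0 - O 0) + (x22 1 - O 1)*(b 1 - O 1) = e2 := congrArg Prod.snd hF22
  have hc12 : c1 ≠ c2 := by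
    rw [hc1, hc2]; intro h
    have hz : ρ * s = 0 := by linear_combination -h/2
    exact (mul_pos hρ hs).ne' hz
  have he12 : e1 ≠ e2 := by
    rw [he1, he2]; intro h
    have hz : ρ * t = 0 := by linear_combination -h/2
    exact (mul_pos hρ ht).ne' hz
  have hne1112 : x11 ≠ x12 := by
    intro h; rw [h] at hF11
    exact he12 (congrArg Prod.snd (hF11.symm.trans hF12))
  have hne1121 : x11 ≠ x21 := by
    intro h; rw [h] at hF11
    exact hc12 (congrArg Prod.fst (hF11.symm.trans hF21))
  have hne1221 : x12 ≠ x21 := by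
    intro h; rw [h] at hF12
    exact hc12 (congrArg Prod.fst (hF12.symm.trans hF21))
  have hA' : ((x11 0 - O 0) + (x22 0 - O 0) - (x12 0 - O 0) - (x21 0 - O 0)) * (a 0 - O 0)
      + ((x11 1 - O 1) + (x22 1 - O 1) - (x12 1 - O 1) - (x21 1 - O 1)) * (a 1 - O 1) = 0 := by
    linear_combination hP11 + hP22 - hP12 - hP21
  have hB' : ((x11 0 - O 0) + (x22 0 - O 0) - (x12 0 - O 0) - (x21 0 - O 0)) * (b 0 - O 0)
      + ((x11 1 - O 1) + (x22 1 - O 1) - (x12 1 - O 1) - (x21 1 - O 1)) * (b 1 - O 1) = 0 := by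
    linear_combination hQ11 + hQ22 - hQ12 - hQ21
  have hdel0 : (x11 0 - O 0) + (x22 0 - O 0) - (x12 0 - O 0) - (x21 0 - O 0) = 0 := by
    have e : ((x11 0 - O 0) + (x22 0 - O 0) - (x12 0 - O 0) - (x21 0 - O 0)) *
        ((a 0 - O 0) * (b 1 - O 1) - (a 1 - O 1) * (b 0 - O 0)) = 0 := by
      linear_combination (b 1 - O 1)*hA' - (a 1 - O 1)*hB'
    exact (mul_eq_zero.mp e).resolve_right hdet
  have hdel1 : (x11 1 - O 1) + (x22 1 - O 1) - (x12 1 - O 1) - (x21 1 - O 1) = 0 := by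
    have e : ((x11 1 - O 1) + (x22 1 - O 1) - (x12 1 - O 1) - (x21 1 - O 1)) *
        ((a 0 - O 0) * (b 1 - O 1) - (a 1 - O 1) * (b 0 - O 0)) = 0 := by
      linear_combination (a 0 - O 0)*hB' - (b 0 - O 0)*hA'
    exact (mul_eq_zero.mp e).resolve_right hdet
  have hn11 := hdc x11 hx11
  have hn12 := hdc x12 hx12
  have hn21 := hdc x21 hx21
  have hn22 := hdc x22 hx22
  have h21c0 : x21 0 - O 0 = (x11 0 - O 0) + (x22 0 - O 0) - (x12 0 - O 0) := by linarith
  have h21c1 : x21 1 - O 1 = (x11 1 - O 1) + (x22 1 - O 1) - (x12 1 - O 1) := by linarith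
  have hn21' := hn21
  rw [h21c0, h21c1] at hn21'
  obtain ⟨hp0, hp1⟩ := three_pts (x11 0 - O 0) (x11 1 - O 1) (x12 0 - O 0) (x12 1 - O 1)
      (x21 0 - O 0) (x21 1 - O 1)
      ((x11 0 - O 0) + (x22 0 - O 0)) ((x11 1 - O 1) + (x22 1 - O 1))
      (by linear_combination hn11 - hn12)
      (by linear_combination hn11 - hn21)
      (by linear_combination hn11/2 - hn12/2 - hn22/2 + hn21'/2)
      (by linear_combination hn11/2 + hn12/2 - hn22/2 - hn21'/2
            - ((x11 0 - O 0) + (x22 0 - O 0))*h21c0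
            - ((x11 1 - O 1) + (x22 1 - O 1))*h21c1)
      (by rintro ⟨u1, u2⟩; apply hne1112; ext i; fin_cases i
          · show x11 0 = x12 0; linarith
          · show x11 1 = x12 1; linarith)
      (by rintro ⟨u1, u2⟩; apply hne1121; ext i; fin_cases i
          · show x11 0 = x21 0; linarith
          · show x11 1 = x21 1; linarith)
      (by rintro ⟨u1, u2⟩; apply hne1221; ext i; fin_cases i
          · show x12 0 = x21 0; linarith
          · show x12 1 = x21 1; linarith)
  have hc2n : c1 + c2 = 0 := by
    linear_combination -hP11 - hP22 + (a 0 - O 0)*hp0 + (a 1 - O 1)*hp1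
  have he2n : e1 + e2 = 0 := by
    linear_combination -hQ11 - hQ22 + (b 0 - O 0)*hp0 + (b 1 - O 1)*hp1
  have goalA : dist O a ^ 2 = s^2 + ρ^2 - m^2 := by
    rw [dist_sq_coords]
    linear_combination hc2n - hc1 - hc2
  have goalB : dist O b ^ 2 = t^2 + ρ^2 - m^2 := by
    rw [dist_sq_coords]
    linear_combination he2n - he1 - he2
  have hc1ne : c1 ≠ 0 := fun h => hc12 (by rw [h]; linarith)
  have halpha : (x11 0 - x12 0)*(a 0 - O 0) + (x11 1 - x12 1)*(a 1 - O 1) = 0 := by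
    linear_combination hP11 - hP12
  have hchord : (x11 0 - x12 0)*((x11 0 - O 0) + (x12 0 - O 0))
      + (x11 1 - x12 1)*((x11 1 - O 1) + (x12 1 - O 1)) = 0 := by
    linear_combination hn11 - hn12
  have hane : x11 0 - x12 0 ≠ 0 ∨ x11 1 - x12 1 ≠ 0 := by
    by_contra hcc; push_neg at hcc
    apply hne1112; ext i; fin_cases i
    · show x11 0 = x12 0; linarith [hcc.1]
    · show x11 1 = x12 1; linarith [hcc.2]
  have hdetAw : (a 0 - O 0)*((x11 1 - O 1) + (x12 1 - O 1))
      - (a 1 - O 1)*((x11 0 - O 0) + (x12 0 - O 0)) = 0 := by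
    rcases hane with h | h
    · have e : ((a 0 - O 0)*((x11 1 - O 1) + (x12 1 - O 1))
          - (a 1 - O 1)*((x11 0 - O 0) + (x12 0 - O 0))) * (x11 0 - x12 0) = 0 := by
        linear_combination ((x11 1 - O 1) + (x12 1 - O 1))*halpha - (a 1 - O 1)*hchord
      exact (mul_eq_zero.mp e).resolve_right h
    · have e : ((a 0 - O 0)*((x11 1 - O 1) + (x12 1 - O 1))
          - (a 1 - O 1)*((x11 0 - O 0) + (x12 0 - O 0))) * (x11 1 - x12 1) = 0 := by
        linear_combination (a 0 - O 0)*hchord - ((x11 0 - O 0) + (x12 0 - O 0))*halpha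
      exact (mul_eq_zero.mp e).resolve_right h
  have hwB : ((x11 0 - O 0) + (x12 0 - O 0))*(b 0 - O 0)
      + ((x11 1 - O 1) + (x12 1 - O 1))*(b 1 - O 1) = 0 := by
    linear_combination hQ11 + hQ12 + he2n
  have hwA2 : ((x11 0 - O 0) + (x12 0 - O 0))*(a 0 - O 0)
      + ((x11 1 - O 1) + (x12 1 - O 1))*(a 1 - O 1) = 2*c1 := by
    linear_combination hP11 + hP12
  have hperp : ⟪a - O, b - O⟫ = 0 := by
    rw [inner_coords]
    have key : ((a 0 - O 0)*(b 0 - O 0) + (a 1 - O 1)*(b 1 - O 1)) * (2*c1) = 0 := by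
      linear_combination ((a 0 - O 0)^2 + (a 1 - O 1)^2)*hwB
        - ((a 0 - O 0)*(b 1 - O 1) - (a 1 - O 1)*(b 0 - O 0))*hdetAw
        - ((a 0 - O 0)*(b 0 - O 0) + (a 1 - O 1)*(b 1 - O 1))*hwA2
    have h2c : (2:ℝ)*c1 ≠ 0 := fun h => hc1ne (by linarith)
    have hz := (mul_eq_zero.mp key).resolve_right h2c
    simpa using hz
  have hq0 : (x12 0 - O 0) + (x21 0 - O 0) = 0 := by linarith
  have hq1 : (x12 1 - O 1) + (x21 1 - O 1) = 0 := by linarith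
  have i11 : (2:ℝ) • O - x11 = x22 := by
    ext i; fin_cases i
    · show ((2:ℝ) • O - x11) 0 = x22 0; simp; linarith
    · show ((2:ℝ) • O - x11) 1 = x22 1; simp; linarith
  have i22 : (2:ℝ) • O - x22 = x11 := by
    ext i; fin_cases i
    · show ((2:ℝ) • O - x22) 0 = x11 0; simp; linarith
    · show ((2:ℝ) • O - x22) 1 = x11 1; simp; linarith
  have i12 : (2:ℝ) • O - x12 = x21 := by
    ext i; fin_cases i
    · show ((2:ℝ) • O - x12) 0 = x21 0; simp; linarith
    · show ((2:ℝ) • O - x12) 1 = x21 1; simp; linarith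
  have i21 : (2:ℝ) • O - x21 = x12 := by
    ext i; fin_cases i
    · show ((2:ℝ) • O - x21) 0 = x12 0; simp; linarith
    · show ((2:ℝ) • O - x21) 1 = x12 1; simp; linarith
  have hSsub : S ⊆ {x11, x12, x21, x22} := by
    intro x hx
    simp only [Set.mem_insert_iff, Set.mem_singleton_iff]
    rcases hPa x hx with h | h <;> rcases hQb x hx with h' | h'
    · exact Or.inl (hinj x x11 (h.trans hP11.symm) (h'.trans hQ11.symm))
    · exact Or.inr (Or.inl (hinj x x12 (h.trans hP12.symm) (h'.trans hQ12.symm)))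
    · exact Or.inr (Or.inr (Or.inl (hinj x x21 (h.trans hP21.symm) (h'.trans hQ21.symm))))
    · exact Or.inr (Or.inr (Or.inr (hinj x x22 (h.trans hP22.symm) (h'.trans hQ22.symm))))
  have hSeq : S = {x11, x12, x21, x22} := by
    apply Set.Subset.antisymm hSsub
    intro x hx
    simp only [Set.mem_insert_iff, Set.mem_singleton_iff] at hx
    rcases hx with rfl | rfl | rfl | rfl <;> assumption
  have hsym : (fun z : Plane => (2:ℝ) • O - z) '' S = S := by
    rw [hSeq]
    simp only [Set.image_insert_eq, Set.image_singleton, i11, i12, i21, i22]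
    ext y; simp only [Set.mem_insert_iff, Set.mem_singleton_iff]; tauto
  exact ⟨goalA, goalB, hperp, hsym⟩

open scoped RealInnerProductSpace in
/-- Lemma 7: four common solutions of one type for two circles inside the annulus not
collinear with the center force type B, perpendicular diameters, and a centrally
symmetric set of centers. -/
theorem four_common_solutions_one_type
    (O a b : Plane) (r R s t : ℝ)
    (hr : 0 < r) (hrR : r < R) (hs : 0 < s) (ht : 0 < t)
    (ha₁ : r + s < dist O a) (ha₂ : dist O a + s < R)
    (hb₁ : r + t < dist O b) (hb₂ : dist O b + t < R)
    (hncol : ¬ Collinear ℝ ({O, a, b} : Set Plane))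
    (X : Set (Plane × ℝ)) (hcard : X.encard = 4)
    (hpos : ∀ d ∈ X, 0 < d.2)
    (htan : ∀ d ∈ X, Tangent d (a, s) ∧ Tangent d (b, t))
    (htype : (∀ d ∈ X, TypeA O r R d) ∨ (∀ d ∈ X, TypeB O r R d)) :
    (∀ d ∈ X, TypeB O r R d) ∧ ⟪a - O, b - O⟫ = 0 ∧
      (fun z : Plane => (2 : ℝ) • O - z) '' (Prod.fst '' X) = Prod.fst '' X := by
  classical
  rcases htype with hA | hB
  · exfalso
    have hrad : ∀ d ∈ X, d.2 = (R - r)/2 ∧ dist O d.1 = (R + r)/2 := by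
      intro d hd
      obtain ⟨h1, h2⟩ := hA d hd
      constructor <;> linarith
    have hinjX : Set.InjOn Prod.fst X := by
      intro d hd d' hd' h
      have e2 : d.2 = d'.2 := by rw [(hrad d hd).1, (hrad d' hd').1]
      exact Prod.ext h e2
    have hScard : (Prod.fst '' X).encard = 4 := by rw [hinjX.encard_image, hcard]
    have hdist : ∀ x ∈ Prod.fst '' X, dist O x = (R + r)/2 := by
      rintro x ⟨d, hd, rfl⟩; exact (hrad d hd).2
    have hta : ∀ x ∈ Prod.fst '' X,
        dist x a ^ 2 = ((R - r)/2 + s)^2 ∨ dist x a ^ 2 = ((R - r)/2 - s)^2 := by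
      rintro x ⟨d, hd, rfl⟩
      have h2 := (htan d hd).1.2
      simp only at h2
      rcases h2 with h | h
      · left; rw [h, (hrad d hd).1]
      · right; rw [h, sq_abs, (hrad d hd).1]
    have htb : ∀ x ∈ Prod.fst '' X,
        dist x b ^ 2 = ((R - r)/2 + t)^2 ∨ dist x b ^ 2 = ((R - r)/2 - t)^2 := by
      rintro x ⟨d, hd, rfl⟩
      have h2 := (htan d hd).2.2
      simp only at h2
      rcases h2 with h | h
      · left; rw [h, (hrad d hd).1]
      · right; rw [h, sq_abs, (hrad d hd).1]
    obtain ⟨hOa, -, -, -⟩ := main_aux O a b ((R + r)/2) ((R - r)/2) s t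
      (by linarith) hs ht hncol _ hScard hdist hta htb
    -- hOa : dist O a ^ 2 = s^2 + ((R-r)/2)^2 - ((R+r)/2)^2  = s^2 - r*R
    have hd2 : (r + s)^2 < dist O a ^ 2 := by
      nlinarith [dist_nonneg (x := O) (y := a)]
    nlinarith [mul_pos hr (hr.trans hrR), mul_pos hr hs, sq_nonneg r]
  · have hrad : ∀ d ∈ X, d.2 = (R + r)/2 ∧ dist O d.1 = (R - r)/2 := by
      intro d hd
      obtain ⟨h1, h2⟩ := hB d hd
      constructor <;> linarith
    have hinjX : Set.InjOn Prod.fst X := by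
      intro d hd d' hd' h
      have e2 : d.2 = d'.2 := by rw [(hrad d hd).1, (hrad d' hd').1]
      exact Prod.ext h e2
    have hScard : (Prod.fst '' X).encard = 4 := by rw [hinjX.encard_image, hcard]
    have hdist : ∀ x ∈ Prod.fst '' X, dist O x = (R - r)/2 := by
      rintro x ⟨d, hd, rfl⟩; exact (hrad d hd).2
    have hta : ∀ x ∈ Prod.fst '' X,
        dist x a ^ 2 = ((R + r)/2 + s)^2 ∨ dist x a ^ 2 = ((R + r)/2 - s)^2 := by
      rintro x ⟨d, hd, rfl⟩
      have h2 := (htan d hd).1.2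
      simp only at h2
      rcases h2 with h | h
      · left; rw [h, (hrad d hd).1]
      · right; rw [h, sq_abs, (hrad d hd).1]
    have htb : ∀ x ∈ Prod.fst '' X,
        dist x b ^ 2 = ((R + r)/2 + t)^2 ∨ dist x b ^ 2 = ((R + r)/2 - t)^2 := by
      rintro x ⟨d, hd, rfl⟩
      have h2 := (htan d hd).2.2
      simp only at h2
      rcases h2 with h | h
      · left; rw [h, (hrad d hd).1]
      · right; rw [h, sq_abs, (hrad d hd).1]
    obtain ⟨-, -, hperp, hsym⟩ := main_aux O a b ((R - r)/2) ((R + r)/2) s t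
      (by linarith) hs ht hncol _ hScard hdist hta htb
    exact ⟨hB, hperp, hsym⟩
end
end
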